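/- arXiv:2407.02338 — 3 statements merged into one kernel-verified Lean document; each statement's English description precedes it below -/
import Mathlib

section
/- For every chamber 𝒞 of the affine Weyl group arrangement of type Ã₂, there is exactly one root α ∈ Φ such that v + α ∈ 𝒞 for all v ∈ 𝒞 (the root pointing into 𝒞). -/
noncomputable section

open scoped RealInnerProductSpace

/-- The plane `V = ℝ²`. -/
abbrev V : Type := EuclideanSpace ℝ (Fin 2)

/-- The affine reflection in the hyperplane `H_{α,k}`. -/
def sRefl (α : V) (k : ℤ) (v : V) : V := v - (⟪α, v⟫ - (k : ℝ)) • α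

/-- The positive roots `α₁, α₂, α̃ = α₁ + α₂` of the `A₂` root system. -/
def PosRoots (a1 a2 : V) : Set V := {a1, a2, a1 + a2}

/-- The root system `Φ` of type `A₂`. -/
def Phi (a1 a2 : V) : Set V := {α | α ∈ PosRoots a1 a2 ∨ -α ∈ PosRoots a1 a2}

/-- A permutation of `V` acting as the affine reflection `s_{α,k}` for some `α ∈ Φ`, `k ∈ ℤ`. -/
def IsAffRefl (a1 a2 : V) (g : Equiv.Perm V) : Prop :=
  ∃ α ∈ Phi a1 a2, ∃ k : ℤ, ∀ v : V, g v = sRefl α k v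

/-- The affine Weyl group of type `Ã₂`: the group of (affine) transformations of `V`
generated by all the affine reflections `s_{α,k}`, `α ∈ Φ`, `k ∈ ℤ`. -/
def AffWeyl (a1 a2 : V) : Subgroup (Equiv.Perm V) :=
  Subgroup.closure {g | IsAffRefl a1 a2 g}

/-- The action of an element of the affine Weyl group on the plane `V`. -/
def act {a1 a2 : V} (w : AffWeyl a1 a2) (v : V) : V := (w : Equiv.Perm V) v

/-- `g` is one of the simple reflections `s₁ = s_{α₁,0}`, `s₂ = s_{α₂,0}`, `s₀ = s_{α̃,1}`. -/
def IsSimpleRefl (a1 a2 : V) (g : Equiv.Perm V) : Prop :=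
  (∀ v : V, g v = sRefl a1 0 v) ∨ (∀ v : V, g v = sRefl a2 0 v) ∨
    (∀ v : V, g v = sRefl (a1 + a2) 1 v)

/-- The length function of the affine Weyl group `W` of type `Ã₂`, with respect to the
simple reflections. -/
def len (a1 a2 : V) (w : AffWeyl a1 a2) : ℕ :=
  sInf {n | ∃ l : List (AffWeyl a1 a2),
    (∀ g ∈ l, IsSimpleRefl a1 a2 (g : Equiv.Perm V)) ∧ l.length = n ∧ l.prod = w}

/-- The reflections of `W` are the `s_{α,k}`, `α ∈ Φ`, `k ∈ ℤ`. -/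
def IsReflW (a1 a2 : V) (g : Equiv.Perm V) : Prop := IsAffRefl a1 a2 g

/-- The Bruhat order on `W`: the partial order generated by `u < r * u` whenever `r` is a
reflection and `ℓ(u) < ℓ(r * u)`. -/
def BruhatLE (a1 a2 : V) (x w : AffWeyl a1 a2) : Prop :=
  Relation.ReflTransGen
    (fun a b => ∃ r : AffWeyl a1 a2, IsReflW a1 a2 (r : Equiv.Perm V) ∧ b = r * a ∧
      len a1 a2 a < len a1 a2 b) x w

/-- The strict Bruhat order. -/
def BruhatLT (a1 a2 : V) (x w : AffWeyl a1 a2) : Prop := BruhatLE a1 a2 x w ∧ x ≠ w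

/-- The fundamental alcove `A₀`. -/
def A0 (a1 a2 : V) : Set V :=
  {v | 0 < ⟪a1, v⟫ ∧ 0 < ⟪a2, v⟫ ∧ ⟪a1 + a2, v⟫ < 1}

/-- The fundamental `α`-root strip. -/
def Strip (α : V) : Set V := {v | 0 ≤ ⟪α, v⟫ ∧ ⟪α, v⟫ ≤ 1}

/-- The union of the three fundamental root strips. -/
def StripUnion (a1 a2 : V) : Set V := Strip a1 ∪ Strip a2 ∪ Strip (a1 + a2)

/-- `w` is spiral if the alcove center `w q` lies in a fundamental root strip. -/
def IsSpiral (a1 a2 q : V) (w : AffWeyl a1 a2) : Prop :=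
  (w : Equiv.Perm V) q ∈ StripUnion a1 a2

/-- The chambers: connected components of the complement of the union of the fundamental
root strips. -/
def IsChamber (a1 a2 : V) (C : Set V) : Prop :=
  ∃ v ∈ (StripUnion a1 a2)ᶜ, C = connectedComponentIn (StripUnion a1 a2)ᶜ v

/-- The chamber containing the alcove center `w q` (for non-spiral `w`). -/
def chamberOf (a1 a2 q : V) (w : AffWeyl a1 a2) : Set V :=
  connectedComponentIn (StripUnion a1 a2)ᶜ ((w : Equiv.Perm V) q)

/-- The root hyperplane (line) `H_{α,k}`. -/
def Hplane (α : V) (k : ℤ) : Set V := {v | ⟪α, v⟫ = (k : ℝ)}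

/-- `H_{α,i}` (with `α` a positive root and `i ∈ {0,1}`) is a wall of the chamber `C`:
the boundary of `C` meets `H_{α,i}` in more than one point (a ray). -/
def IsWall (a1 a2 : V) (C : Set V) (α : V) (i : ℤ) : Prop :=
  α ∈ PosRoots a1 a2 ∧ (i = 0 ∨ i = 1) ∧
    ∃ u ∈ frontier C ∩ Hplane α i, ∃ v ∈ frontier C ∩ Hplane α i, u ≠ v

/-- A chamber is even if both of its walls are among the fixed hyperplanes
`H_{α₁,0}, H_{α₂,0}, H_{α̃,1}` of the simple reflections. -/
def IsEvenChamber (a1 a2 : V) (C : Set V) : Prop :=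
  IsChamber a1 a2 C ∧ ∀ α i, IsWall a1 a2 C α i →
    ((α = a1 ∧ i = 0) ∨ (α = a2 ∧ i = 0) ∨ (α = a1 + a2 ∧ i = 1))

/-- `q^w_x = n^w_x - ℓ(w)`, where `n^w_x` is the number of reflections `r` with `r x ≤ w`. -/
def qInt (a1 a2 : V) (w x : AffWeyl a1 a2) : ℤ :=
  (Set.ncard {r : AffWeyl a1 a2 |
      IsReflW a1 a2 (r : Equiv.Perm V) ∧ BruhatLE a1 a2 (r * x) w} : ℤ)
    - (len a1 a2 w : ℤ)

/-- The root `α ∈ Φ` points into the chamber `C`. -/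
def PointsInto (a1 a2 : V) (C : Set V) (α : V) : Prop :=
  α ∈ Phi a1 a2 ∧ ∀ v ∈ C, v + α ∈ C

/-- `L(w)`: the subgroup generated by the simple reflections `s` with `s w < w`. -/
def Lsub (a1 a2 : V) (w : AffWeyl a1 a2) : Subgroup (AffWeyl a1 a2) :=
  Subgroup.closure {s | IsSimpleRefl a1 a2 (s : Equiv.Perm V) ∧ BruhatLT a1 a2 (s * w) w}

/-- `w` is twisted spiral if `w = z s` with `z` spiral of even length, `s` simple, and
`ℓ(w) = ℓ(z) + 1`. -/
def IsTwistedSpiral (a1 a2 q : V) (w : AffWeyl a1 a2) : Prop :=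
  ∃ z s : AffWeyl a1 a2, IsSpiral a1 a2 q z ∧ Even (len a1 a2 z) ∧
    IsSimpleRefl a1 a2 (s : Equiv.Perm V) ∧ w = z * s ∧ len a1 a2 w = len a1 a2 z + 1

/-!
The three functionals `⟪a₁, ·⟫`, `⟪a₂, ·⟫`, `⟪a₁ + a₂, ·⟫` take values outside `[0, 1]` on the
complement of the strips, so this complement is the disjoint union of the open convex sets on
which each of them is either `< 0` or `> 1`; these are the chambers. A translation by `β` maps
a nonempty such set into itself iff each functional is `≤ 0`, resp. `≥ 0`, at `β`. Six of the
eight sign patterns are realised, and they are exactly the sign patterns of the pairings of the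
six roots with `a₁, a₂, a₁ + a₂`, which are all nonzero.
-/

open Set Function

theorem connectedComponentIn_iUnion_eq {X ι : Type*} [TopologicalSpace X] {U : ι → Set X}
    (hopen : ∀ i, IsOpen (U i)) (hconn : ∀ i, IsPreconnected (U i))
    (hdisj : Pairwise (Disjoint on U)) {i : ι} {x : X} (hx : x ∈ U i) :
    connectedComponentIn (⋃ j, U j) x = U i := by
  refine subset_antisymm ?_ ((hconn i).subset_connectedComponentIn hx (subset_iUnion U i))
  have hcover : ⋃ j, U j ⊆ U i ∪ ⋃ (j) (_ : j ≠ i), U j := by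
    refine iUnion_subset fun j => ?_
    rcases eq_or_ne j i with rfl | hj
    · exact subset_union_left
    · exact (subset_biUnion_of_mem (u := U) hj).trans subset_union_right
  have hdisj' : Disjoint (U i) (⋃ (j) (_ : j ≠ i), U j) :=
    disjoint_iUnion₂_right.mpr fun j hj => hdisj hj.symm
  exact isPreconnected_connectedComponentIn.subset_left_of_subset_union (hopen i)
    (isOpen_biUnion fun j _ => hopen j) hdisj'
    ((connectedComponentIn_subset _ _).trans hcover) ⟨x, mem_connectedComponentIn
      (mem_iUnion_of_mem i hx), hx⟩

def OffUnit (c : Bool) (t : ℝ) : Prop := cond c (1 < t) (t < 0)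

def Away (c : Bool) (s : ℝ) : Prop := cond c (0 ≤ s) (s ≤ 0)

theorem OffUnit.add {c : Bool} {t s : ℝ} (ht : OffUnit c t) (hs : Away c s) :
    OffUnit c (t + s) := by
  cases c
  · exact add_neg_of_neg_of_nonpos ht hs
  · exact lt_add_of_lt_of_nonneg ht hs

theorem OffUnit.unique {c c' : Bool} {t : ℝ} (h : OffUnit c t) (h' : OffUnit c' t) :
    c = c' := by
  cases c <;> cases c' <;> simp only [OffUnit, cond_true, cond_false] at h h' <;>
    first | rfl | linarith

theorem nonneg_of_forall_lt_add_mul {a t s : ℝ} (h : ∀ n : ℕ, a < t + n * s) : 0 ≤ s := by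
  by_contra! hs
  obtain ⟨n, hn⟩ := exists_nat_gt ((t - a) / -s)
  rw [div_lt_iff₀ (neg_pos.mpr hs)] at hn
  linarith [h n]

theorem away_of_forall_offUnit {c : Bool} {t s : ℝ} (h : ∀ n : ℕ, OffUnit c (t + n * s)) :
    Away c s := by
  cases c <;> simp only [OffUnit, Away, cond_true, cond_false] at h ⊢
  · exact neg_nonneg.mp (nonneg_of_forall_lt_add_mul (a := 0) (t := -t) fun n => by
      linarith [h n])
  · exact nonneg_of_forall_lt_add_mul h

theorem exists_offUnit_iff {t : ℝ} : (∃ c, OffUnit c t) ↔ t < 0 ∨ 1 < t := by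
  simp [OffUnit]

theorem add_nsmul_mem_of_forall_add_mem {M : Type*} [AddMonoid M] {S : Set M} {β : M}
    (h : ∀ w ∈ S, w + β ∈ S) {v : M} (hv : v ∈ S) (n : ℕ) : v + n • β ∈ S := by
  induction n with
  | zero => simpa using hv
  | succ n ih => simpa [succ_nsmul, add_assoc] using h _ ih

section SignRegion

variable {E ι : Type*} [NormedAddCommGroup E] [InnerProductSpace ℝ E]

def signRegion (u : ι → E) (c : ι → Bool) : Set E := {v | ∀ i, OffUnit (c i) ⟪u i, v⟫}

theorem isOpen_signRegion [Finite ι] (u : ι → E) (c : ι → Bool) :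
    IsOpen (signRegion u c) := by
  simp only [signRegion, ofPred_forall]
  refine isOpen_iInter_of_finite fun i => ?_
  cases c i
  · exact isOpen_lt (continuous_const.inner continuous_id) continuous_const
  · exact isOpen_lt continuous_const (continuous_const.inner continuous_id)

theorem convex_signRegion (u : ι → E) (c : ι → Bool) : Convex ℝ (signRegion u c) := by
  simp only [signRegion, ofPred_forall]
  refine convex_iInter fun i => ?_
  have hlin : IsLinearMap ℝ fun v : E => ⟪u i, v⟫ :=
    ⟨inner_add_right (u i), fun r v => real_inner_smul_right (u i) v r⟩
  cases c i
  · exact convex_halfSpace_lt hlin 0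
  · exact convex_halfSpace_gt hlin 1

theorem pairwise_disjoint_signRegion (u : ι → E) : Pairwise (Disjoint on signRegion u) :=
  fun _ _ hne => disjoint_left.mpr fun _ hv hv' =>
    hne (funext fun i => (hv i).unique (hv' i))

theorem forall_add_mem_signRegion_iff {u : ι → E} {c : ι → Bool} {v : E}
    (hv : v ∈ signRegion u c) {β : E} :
    (∀ w ∈ signRegion u c, w + β ∈ signRegion u c) ↔ ∀ i, Away (c i) ⟪u i, β⟫ := by
  refine ⟨fun h i => away_of_forall_offUnit (t := ⟪u i, v⟫) fun n => ?_, fun h w hw i => ?_⟩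
  · simpa [inner_add_right, ← Nat.cast_smul_eq_nsmul ℝ, real_inner_smul_right] using
      add_nsmul_mem_of_forall_add_mem h hv n i
  · simpa [inner_add_right] using (hw i).add (h i)

end SignRegion

theorem compl_iUnion_strip_eq {ι : Type*} (u : ι → V) :
    (⋃ i, Strip (u i))ᶜ = ⋃ c, signRegion u c := by
  ext v
  simp only [Strip, signRegion, mem_compl_iff, mem_iUnion, mem_ofPred_eq, not_exists, not_and_or,
    not_le]
  exact (forall_congr' fun i => exists_offUnit_iff.symm).trans Classical.skolem

theorem connectedComponentIn_compl_iUnion_strip {ι : Type*} [Finite ι] {u : ι → V}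
    {c : ι → Bool} {v : V} (hv : v ∈ signRegion u c) :
    connectedComponentIn (⋃ i, Strip (u i))ᶜ v = signRegion u c := by
  rw [compl_iUnion_strip_eq]
  exact connectedComponentIn_iUnion_eq (isOpen_signRegion u)
    (fun c => (convex_signRegion u c).isPreconnected) (pairwise_disjoint_signRegion u) hv

theorem stripUnion_eq (a1 a2 : V) : StripUnion a1 a2 = ⋃ i, Strip (![a1, a2, a1 + a2] i) := by
  ext
  simp [StripUnion, Fin.exists_fin_succ, or_assoc]

theorem mem_Phi_iff {a1 a2 β : V} :
    β ∈ Phi a1 a2 ↔ β = a1 ∨ β = a2 ∨ β = a1 + a2 ∨ β = -a1 ∨ β = -a2 ∨ β = -(a1 + a2) := by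
  simp only [Phi, PosRoots, mem_ofPred_eq, mem_insert_iff, mem_singleton_iff, neg_eq_iff_eq_neg]
  tauto

theorem existsUnique_mem_Phi_away {a1 a2 : V} (hnorm1 : ⟪a1, a1⟫ = 2) (hnorm2 : ⟪a2, a2⟫ = 2)
    (hip : ⟪a1, a2⟫ = -1) {c : Fin 3 → Bool} (hc : (signRegion ![a1, a2, a1 + a2] c).Nonempty) :
    ∃! β, β ∈ Phi a1 a2 ∧ ∀ i, Away (c i) ⟪![a1, a2, a1 + a2] i, β⟫ := by
  have hip' : ⟪a2, a1⟫ = -1 := by rwa [real_inner_comm]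
  obtain ⟨v, hv⟩ := hc
  simp only [signRegion, mem_ofPred_eq, Fin.forall_fin_succ, IsEmpty.forall_iff, and_true,
    Fin.succ_zero_eq_one, Fin.succ_one_eq_two, Matrix.cons_val] at hv ⊢
  have hsum : ⟪a1 + a2, v⟫ = ⟪a1, v⟫ + ⟪a2, v⟫ := inner_add_left a1 a2 v
  generalize c 0 = c₁, c 1 = c₂, c 2 = c₃ at hv ⊢
  cases c₁ <;> cases c₂ <;> cases c₃ <;> simp only [OffUnit, Away, cond_true, cond_false] at hv ⊢
  case false.false.true | true.true.false => exfalso; obtain ⟨h₁, h₂, h₃⟩ := hv; linarith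
  case' false.false.false => refine ⟨-(a1 + a2), ?_⟩
  case' false.true.false => refine ⟨-a1, ?_⟩
  case' false.true.true => refine ⟨a2, ?_⟩
  case' true.false.false => refine ⟨-a2, ?_⟩
  case' true.false.true => refine ⟨a1, ?_⟩
  case' true.true.true => refine ⟨a1 + a2, ?_⟩
  all_goals
    refine ⟨⟨by simp [mem_Phi_iff], by
      simp only [inner_add_left, inner_add_right, inner_neg_right, hnorm1, hnorm2, hip, hip']
      norm_num⟩, ?_⟩
    rintro β ⟨hβ, hβc⟩
    rcases mem_Phi_iff.mp hβ with rfl | rfl | rfl | rfl | rfl | rfl <;> first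
      | rfl
      | simp only [inner_add_left, inner_add_right, inner_neg_right, hnorm1, hnorm2, hip, hip']
          at hβc
        norm_num at hβc

/-- **Lemma.** For every chamber `𝒞` of the affine Weyl group arrangement of type `Ã₂`,
there is exactly one root `α ∈ Φ` such that `v + α ∈ 𝒞` for all `v ∈ 𝒞`
(the root pointing into `𝒞`). -/
theorem exists_unique_root_pointing_into_chamber
    (a1 a2 : V)
    (hnorm1 : ⟪a1, a1⟫ = 2) (hnorm2 : ⟪a2, a2⟫ = 2) (hip : ⟪a1, a2⟫ = -1)
    (C : Set V) (hC : IsChamber a1 a2 C) :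
    ∃! α : V, PointsInto a1 a2 C α := by
  obtain ⟨v, hv, rfl⟩ := hC
  rw [stripUnion_eq] at hv ⊢
  obtain ⟨c, hc⟩ := mem_iUnion.mp (compl_iUnion_strip_eq _ ▸ hv)
  rw [connectedComponentIn_compl_iUnion_strip hc]
  simp only [PointsInto, forall_add_mem_signRegion_iff hc]
  exact existsUnique_mem_Phi_away hnorm1 hnorm2 hip ⟨v, hc⟩
end
end

section
/- Let δ ∈ {α₁,α₂,α̃} and ε ∈ {0,1}, so that E = H_{δ,ε} is an edge of the fundamental δ-root strip. Let 𝒞 be a chamber lying on the opposite side of E from the strip, i.e., 𝒞 ⊆ {v : (δ,v) > 1} if ε = 1 and 𝒞 ⊆ {v : (δ,v) < 0} if ε = 0 (there are exactly three such chambers). Let z ∈ W with zq ∈ 𝒞, and set z′ = s_{δ,ε}z. Then ℓ(z′) < ℓ(z), so z′ < z in the Bruhat order. More precisely: if E ∩ cl(A₀) is a single point which equals the vertex of 𝒞, then ℓ(z′) = ℓ(z) − 3; in all other cases ℓ(z′) = ℓ(z) − 1 (in particular whenever a wall of 𝒞 lies on E). -/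
noncomputable section

open scoped RealInnerProductSpace

/-!
For an alcove center `v`, `sepCount v = |⌊⟪α₁, v⟫⌋| + |⌊⟪α₂, v⟫⌋| + |⌊⟪α̃, v⟫⌋|` counts the
hyperplanes separating `v` from `A₀`. Reflecting in a wall of `A₀` changes it by exactly one, and
lowers it when `v` lies beyond that wall; so a descent argument writes `w` as a word of length
`sepCount (w q)`, while each simple reflection raises `sepCount` by at most one. Since `W` acts on
the coordinates `e ∈ ℝ³` of the standard model of `A₂` by permutations and integral translations,
and the coordinates `(1/3, 0, -1/3)` of `q` are pairwise incongruent modulo `ℤ`, only the identity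
fixes `q`. Hence `ℓ(w) = sepCount (w q)`.

The chamber containing `z q` is cut out by the sides of the three strips on which `z q` lies, its
closure by the corresponding closed half-planes. If `E` is a wall of `A₀`, then `E ∩ cl(A₀)` is an
edge and `sepCount` drops by one. Otherwise `E ∩ cl(A₀)` is the vertex `p` of `A₀` opposite to the
parallel wall, the vertex condition says that `z q` lies beyond all three hyperplanes through `p`,
and a computation in root coordinates shows that `sepCount` then drops by three, and by one
otherwise.
-/
open Set

lemma inner_sRefl (β α : V) (k : ℤ) (v : V) :
    ⟪β, sRefl α k v⟫ = ⟪β, v⟫ - (⟪α, v⟫ - k) * ⟪β, α⟫ := by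
  simp only [sRefl, inner_sub_right, real_inner_smul_right]

lemma sRefl_neg (α : V) (k : ℤ) : sRefl (-α) k = sRefl α (-k) := by
  funext v
  simp only [sRefl, inner_neg_left, smul_neg, Int.cast_neg]
  module

lemma sRefl_involutive {α : V} (hα : ⟪α, α⟫ = 2) (k : ℤ) : Function.Involutive (sRefl α k) := by
  intro v
  simp only [sRefl, inner_sub_right, real_inner_smul_right, hα]
  module

structure IsA2Basis (a1 a2 : V) : Prop where
  inner_a1_a1 : ⟪a1, a1⟫ = 2
  inner_a2_a2 : ⟪a2, a2⟫ = 2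
  inner_a1_a2 : ⟪a1, a2⟫ = -1

namespace IsA2Basis

variable {a1 a2 : V} (hA : IsA2Basis a1 a2)
include hA

lemma inner_a2_a1 : ⟪a2, a1⟫ = -1 := by rw [real_inner_comm, hA.inner_a1_a2]

lemma inner_self_of_mem_posRoots {β : V} (hβ : β ∈ PosRoots a1 a2) : ⟪β, β⟫ = 2 := by
  rcases hβ with rfl | rfl | rfl
  · exact hA.inner_a1_a1
  · exact hA.inner_a2_a2
  · simp only [inner_add_left, inner_add_right, hA.inner_a1_a1, hA.inner_a2_a2, hA.inner_a1_a2,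
      hA.inner_a2_a1]
    norm_num

lemma inner_self_of_mem_phi {α : V} (hα : α ∈ Phi a1 a2) : ⟪α, α⟫ = 2 := by
  rcases hα with h | h
  · exact hA.inner_self_of_mem_posRoots h
  · simpa using hA.inner_self_of_mem_posRoots h

lemma ext_of_inner {u v : V} (h1 : ⟪a1, u⟫ = ⟪a1, v⟫) (h2 : ⟪a2, u⟫ = ⟪a2, v⟫) : u = v := by
  have hli : LinearIndependent ℝ ![a1, a2] := by
    rw [LinearIndependent.pair_iff]
    intro s t hst
    have e1 := congrArg (⟪a1, ·⟫) hst
    have e2 := congrArg (⟪a2, ·⟫) hst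
    simp only [inner_add_right, real_inner_smul_right, inner_zero_right, hA.inner_a1_a1,
      hA.inner_a2_a2, hA.inner_a1_a2, hA.inner_a2_a1] at e1 e2
    constructor <;> linarith
  let b := basisOfLinearIndependentOfCardEqFinrank hli (by simp)
  refine InnerProductSpace.ext_inner_left_basis b fun i => ?_
  fin_cases i <;> simpa [b]

variable (k : ℤ) (v : V)

lemma inner_sRefl_a1 :
    ⟪a1, sRefl a1 k v⟫ = 2 * k - ⟪a1, v⟫ ∧ ⟪a2, sRefl a1 k v⟫ = ⟪a1, v⟫ + ⟪a2, v⟫ - k := by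
  simp only [inner_sRefl, hA.inner_a1_a1, hA.inner_a2_a1]; constructor <;> ring

lemma inner_sRefl_a2 :
    ⟪a1, sRefl a2 k v⟫ = ⟪a1, v⟫ + ⟪a2, v⟫ - k ∧ ⟪a2, sRefl a2 k v⟫ = 2 * k - ⟪a2, v⟫ := by
  simp only [inner_sRefl, hA.inner_a2_a2, hA.inner_a1_a2]; constructor <;> ring

lemma inner_sRefl_a1_add_a2 :
    ⟪a1, sRefl (a1 + a2) k v⟫ = k - ⟪a2, v⟫ ∧ ⟪a2, sRefl (a1 + a2) k v⟫ = k - ⟪a1, v⟫ := by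
  simp only [inner_sRefl, inner_add_left, inner_add_right, hA.inner_a1_a1, hA.inner_a2_a2,
    hA.inner_a1_a2, hA.inner_a2_a1]
  constructor <;> ring

end IsA2Basis

def AlcoveCoords (a1 a2 v : V) (m n c : ℤ) : Prop := ⟪a1, v⟫ = m + c / 3 ∧ ⟪a2, v⟫ = n + c / 3

/-- The alcove barycenters; `c = 1` and `c = 2` correspond to the two orientations of alcoves. -/
def IsAlcoveCenter (a1 a2 v : V) : Prop :=
  ∃ m n c : ℤ, (c = 1 ∨ c = 2) ∧ AlcoveCoords a1 a2 v m n c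

/-- For an alcove center `v`, the number of hyperplanes `H_{α,k}` separating `v` from `A₀`. -/
def sepCount (a1 a2 v : V) : ℕ :=
  ⌊⟪a1, v⟫⌋.natAbs + ⌊⟪a2, v⟫⌋.natAbs + ⌊⟪a1 + a2, v⟫⌋.natAbs

lemma floor_intCast_add_div_three {M c : ℤ} (hc : c = 1 ∨ c = 2) : ⌊(M : ℝ) + c / 3⌋ = M := by
  rw [Int.floor_eq_iff]
  rcases hc with rfl | rfl <;> norm_num

namespace AlcoveCoords

variable {a1 a2 v : V} {m n c : ℤ} (h : AlcoveCoords a1 a2 v m n c)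
include h

section

variable (hc : c = 1 ∨ c = 2)
include hc

lemma floor_a1 : ⌊⟪a1, v⟫⌋ = m := by rw [h.1, floor_intCast_add_div_three hc]

lemma floor_a2 : ⌊⟪a2, v⟫⌋ = n := by rw [h.2, floor_intCast_add_div_three hc]

lemma floor_a1_add_a2 : ⌊⟪a1 + a2, v⟫⌋ = m + n + c - 1 := by
  have : ⟪a1 + a2, v⟫ = ((m + n + c - 1 : ℤ) : ℝ) + ((3 - c : ℤ) : ℝ) / 3 := by
    rw [inner_add_left, h.1, h.2]; push_cast; ring
  rw [this, floor_intCast_add_div_three (by omega)]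

lemma sepCount_eq : sepCount a1 a2 v = m.natAbs + n.natAbs + (m + n + c - 1).natAbs := by
  rw [sepCount, h.floor_a1 hc, h.floor_a2 hc, h.floor_a1_add_a2 hc]

end

variable (hA : IsA2Basis a1 a2) (k : ℤ)
include hA

lemma sRefl_a1 :
    AlcoveCoords a1 a2 (sRefl a1 k v) (2 * k - m - 1) (m + n - k + c - 1) (3 - c) := by
  rw [AlcoveCoords, (hA.inner_sRefl_a1 k v).1, (hA.inner_sRefl_a1 k v).2, h.1, h.2]
  constructor <;> push_cast <;> ring

lemma sRefl_a2 :
    AlcoveCoords a1 a2 (sRefl a2 k v) (m + n - k + c - 1) (2 * k - n - 1) (3 - c) := by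
  rw [AlcoveCoords, (hA.inner_sRefl_a2 k v).1, (hA.inner_sRefl_a2 k v).2, h.1, h.2]
  constructor <;> push_cast <;> ring

lemma sRefl_a1_add_a2 :
    AlcoveCoords a1 a2 (sRefl (a1 + a2) k v) (k - n - 1) (k - m - 1) (3 - c) := by
  rw [AlcoveCoords, (hA.inner_sRefl_a1_add_a2 k v).1, (hA.inner_sRefl_a1_add_a2 k v).2, h.1, h.2]
  constructor <;> push_cast <;> ring

end AlcoveCoords

lemma IsAlcoveCenter.sRefl {a1 a2 v β : V} (hA : IsA2Basis a1 a2) (hβ : β ∈ PosRoots a1 a2)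
    (k : ℤ) (hv : IsAlcoveCenter a1 a2 v) : IsAlcoveCenter a1 a2 (sRefl β k v) := by
  obtain ⟨m, n, c, hc, h⟩ := hv
  have hc' : 3 - c = 1 ∨ 3 - c = 2 := by omega
  rcases hβ with rfl | rfl | rfl
  · exact ⟨_, _, _, hc', h.sRefl_a1 hA k⟩
  · exact ⟨_, _, _, hc', h.sRefl_a2 hA k⟩
  · exact ⟨_, _, _, hc', h.sRefl_a1_add_a2 hA k⟩

def IsSimpleHyperplane (a1 a2 δ : V) (ε : ℤ) : Prop :=
  δ = a1 ∧ ε = 0 ∨ δ = a2 ∧ ε = 0 ∨ δ = a1 + a2 ∧ ε = 1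

def SeparatedFromA0 (δ : V) (ε : ℤ) (v : V) : Prop :=
  ε = 0 ∧ ⟪δ, v⟫ < 0 ∨ ε = 1 ∧ 1 < ⟪δ, v⟫

lemma SeparatedFromA0.floor {δ v : V} {ε : ℤ} (hs : SeparatedFromA0 δ ε v) :
    ε = 0 ∧ ⌊⟪δ, v⟫⌋ < 0 ∨ ε = 1 ∧ 1 ≤ ⌊⟪δ, v⟫⌋ := by
  rcases hs with ⟨hε, h⟩ | ⟨hε, h⟩
  · exact Or.inl ⟨hε, Int.floor_lt_zero.2 h⟩
  · exact Or.inr ⟨hε, Int.le_floor.2 (by exact_mod_cast h.le)⟩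

section SimpleHyperplanes

variable {a1 a2 v δ : V} {ε : ℤ} (hA : IsA2Basis a1 a2)
include hA

lemma sepCount_sRefl_add_one (hδε : IsSimpleHyperplane a1 a2 δ ε) (hv : IsAlcoveCenter a1 a2 v)
    (hs : SeparatedFromA0 δ ε v) : sepCount a1 a2 (sRefl δ ε v) + 1 = sepCount a1 a2 v := by
  obtain ⟨m, n, c, hc, h⟩ := hv
  have hfl := hs.floor
  rcases hδε with ⟨rfl, rfl⟩ | ⟨rfl, rfl⟩ | ⟨rfl, rfl⟩
  · rw [h.floor_a1 hc] at hfl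
    rw [(h.sRefl_a1 hA 0).sepCount_eq (by omega), h.sepCount_eq hc]; omega
  · rw [h.floor_a2 hc] at hfl
    rw [(h.sRefl_a2 hA 0).sepCount_eq (by omega), h.sepCount_eq hc]; omega
  · rw [h.floor_a1_add_a2 hc] at hfl
    rw [(h.sRefl_a1_add_a2 hA 1).sepCount_eq (by omega), h.sepCount_eq hc]; omega

lemma sepCount_sRefl_le (hδε : IsSimpleHyperplane a1 a2 δ ε) (hv : IsAlcoveCenter a1 a2 v) :
    sepCount a1 a2 (sRefl δ ε v) ≤ sepCount a1 a2 v + 1 := by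
  obtain ⟨m, n, c, hc, h⟩ := hv
  rcases hδε with ⟨rfl, rfl⟩ | ⟨rfl, rfl⟩ | ⟨rfl, rfl⟩
  · rw [(h.sRefl_a1 hA 0).sepCount_eq (by omega), h.sepCount_eq hc]; omega
  · rw [(h.sRefl_a2 hA 0).sepCount_eq (by omega), h.sepCount_eq hc]; omega
  · rw [(h.sRefl_a1_add_a2 hA 1).sepCount_eq (by omega), h.sepCount_eq hc]; omega

end SimpleHyperplanes

lemma IsAlcoveCenter.exists_simpleHyperplane {a1 a2 v : V} (hv : IsAlcoveCenter a1 a2 v)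
    (h0 : sepCount a1 a2 v ≠ 0) :
    ∃ δ ε, IsSimpleHyperplane a1 a2 δ ε ∧ SeparatedFromA0 δ ε v := by
  obtain ⟨m, n, c, hc, h⟩ := hv
  rw [h.sepCount_eq hc] at h0
  by_cases hm : m < 0
  · refine ⟨a1, 0, Or.inl ⟨rfl, rfl⟩, Or.inl ⟨rfl, ?_⟩⟩
    rw [← Int.floor_lt_zero, h.floor_a1 hc]; exact hm
  by_cases hn : n < 0
  · refine ⟨a2, 0, Or.inr (Or.inl ⟨rfl, rfl⟩), Or.inl ⟨rfl, ?_⟩⟩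
    rw [← Int.floor_lt_zero, h.floor_a2 hc]; exact hn
  refine ⟨a1 + a2, 1, Or.inr (Or.inr ⟨rfl, rfl⟩), Or.inr ⟨rfl, ?_⟩⟩
  have h2 : (2 : ℝ) ≤ m + n + c := by exact_mod_cast (show 2 ≤ m + n + c by omega)
  have hc2 : (c : ℝ) ≤ 2 := by exact_mod_cast (show c ≤ 2 by omega)
  rw [inner_add_left, h.1, h.2]; linarith

lemma IsAlcoveCenter.eq_of_sepCount_eq_zero {a1 a2 q v : V} (hA : IsA2Basis a1 a2)
    (hq : AlcoveCoords a1 a2 q 0 0 1) (hv : IsAlcoveCenter a1 a2 v) (h0 : sepCount a1 a2 v = 0) :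
    v = q := by
  obtain ⟨m, n, c, hc, h⟩ := hv
  rw [h.sepCount_eq hc] at h0
  obtain ⟨rfl, rfl, rfl⟩ : m = 0 ∧ n = 0 ∧ c = 1 := by omega
  exact hA.ext_of_inner (h.1.trans hq.1.symm) (h.2.trans hq.2.symm)

lemma IsAffRefl.exists_posRoot {a1 a2 : V} {g : Equiv.Perm V} (hg : IsAffRefl a1 a2 g) :
    ∃ β ∈ PosRoots a1 a2, ∃ k : ℤ, ∀ v, g v = sRefl β k v := by
  obtain ⟨α, hα | hα, k, hk⟩ := hg
  · exact ⟨α, hα, k, hk⟩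
  · exact ⟨-α, hα, -k, fun v => by rw [hk, sRefl_neg, neg_neg]⟩

lemma IsAffRefl.inv {a1 a2 : V} (hA : IsA2Basis a1 a2) {g : Equiv.Perm V}
    (hg : IsAffRefl a1 a2 g) : IsAffRefl a1 a2 g⁻¹ := by
  obtain ⟨α, hα, k, hk⟩ := hg
  refine ⟨α, hα, k, fun v => ?_⟩
  rw [Equiv.Perm.inv_eq_iff_eq, hk, sRefl_involutive (hA.inner_self_of_mem_phi hα)]

lemma AffWeyl.induction {a1 a2 : V} (hA : IsA2Basis a1 a2) {P : Equiv.Perm V → Prop} (one : P 1)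
    (mul : ∀ g h, P g → P h → P (g * h)) (refl : ∀ g, IsAffRefl a1 a2 g → P g)
    {g : Equiv.Perm V} (hg : g ∈ AffWeyl a1 a2) : P g :=
  Subgroup.closure_induction'' (fun g hg => refl g hg) (fun _ hg => refl _ (IsAffRefl.inv hA hg))
    one (fun g h _ _ => mul g h) hg

lemma isAlcoveCenter_apply {a1 a2 v : V} (hA : IsA2Basis a1 a2) {g : Equiv.Perm V}
    (hg : g ∈ AffWeyl a1 a2) (hv : IsAlcoveCenter a1 a2 v) : IsAlcoveCenter a1 a2 (g v) := by
  refine AffWeyl.induction hA (P := fun g => ∀ v, IsAlcoveCenter a1 a2 v →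
    IsAlcoveCenter a1 a2 (g v)) (fun _ hv => hv) (fun g h hg hh v hv => hg _ (hh v hv)) ?_ hg v hv
  intro g hg v hv
  obtain ⟨β, hβ, k, hk⟩ := hg.exists_posRoot
  rw [hk]; exact hv.sRefl hA hβ k

/-- Coordinates of `v` in the model `{e ∈ ℝ³ | e₀ + e₁ + e₂ = 0}` of `V` in which
`α₁ = e₀ - e₁` and `α₂ = e₁ - e₂`. -/
def epsCoord (a1 a2 v : V) : Fin 3 → ℝ :=
  ![(2 * ⟪a1, v⟫ + ⟪a2, v⟫) / 3, (⟪a2, v⟫ - ⟪a1, v⟫) / 3, -(⟪a1, v⟫ + 2 * ⟪a2, v⟫) / 3]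

lemma inner_a1_eq_epsCoord (a1 a2 v : V) : ⟪a1, v⟫ = epsCoord a1 a2 v 0 - epsCoord a1 a2 v 1 := by
  simp [epsCoord]; ring

lemma inner_a2_eq_epsCoord (a1 a2 v : V) : ⟪a2, v⟫ = epsCoord a1 a2 v 1 - epsCoord a1 a2 v 2 := by
  simp [epsCoord]; ring

def IsPermTranslation (a1 a2 : V) (g : Equiv.Perm V) : Prop :=
  ∃ σ : Equiv.Perm (Fin 3), ∃ t : Fin 3 → ℤ,
    ∀ v i, epsCoord a1 a2 (g v) i = epsCoord a1 a2 v (σ i) + t i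

namespace IsPermTranslation

variable {a1 a2 : V}

lemma one : IsPermTranslation a1 a2 1 := ⟨1, 0, fun v i => by simp⟩

lemma mul {g h : Equiv.Perm V} (hg : IsPermTranslation a1 a2 g)
    (hh : IsPermTranslation a1 a2 h) : IsPermTranslation a1 a2 (g * h) := by
  obtain ⟨σ, t, hgt⟩ := hg
  obtain ⟨τ, s, hhs⟩ := hh
  refine ⟨σ.trans τ, fun i => s (σ i) + t i, fun v i => ?_⟩
  rw [Equiv.Perm.mul_apply, hgt, hhs, Equiv.trans_apply]; push_cast; ring

lemma of_isAffRefl (hA : IsA2Basis a1 a2) {g : Equiv.Perm V} (hg : IsAffRefl a1 a2 g) :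
    IsPermTranslation a1 a2 g := by
  obtain ⟨β, hβ, k, hk⟩ := hg.exists_posRoot
  rcases hβ with rfl | rfl | rfl
  · refine ⟨Equiv.swap 0 1, ![k, -k, 0], fun v i => ?_⟩
    obtain ⟨h1, h2⟩ := hA.inner_sRefl_a1 k v
    fin_cases i <;> simp [epsCoord, hk, h1, h2, Equiv.swap_apply_of_ne_of_ne] <;> ring
  · refine ⟨Equiv.swap 1 2, ![0, k, -k], fun v i => ?_⟩
    obtain ⟨h1, h2⟩ := hA.inner_sRefl_a2 k v
    fin_cases i <;> simp [epsCoord, hk, h1, h2, Equiv.swap_apply_of_ne_of_ne] <;> ring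
  · refine ⟨Equiv.swap 0 2, ![k, 0, -k], fun v i => ?_⟩
    obtain ⟨h1, h2⟩ := hA.inner_sRefl_a1_add_a2 k v
    fin_cases i <;> simp [epsCoord, hk, h1, h2, Equiv.swap_apply_of_ne_of_ne] <;> ring

/-- The `ε`-coordinates `(1/3, 0, -1/3)` of `q` are pairwise incongruent modulo `ℤ`. -/
lemma eq_one_of_apply_eq {q : V} (hA : IsA2Basis a1 a2) (hq : AlcoveCoords a1 a2 q 0 0 1)
    {g : Equiv.Perm V} (hg : IsPermTranslation a1 a2 g) (hgq : g q = q) : g = 1 := by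
  obtain ⟨σ, t, ht⟩ := hg
  have hq' : ∀ i : Fin 3, epsCoord a1 a2 q i = (1 - (i : ℕ)) / 3 := by
    intro i; fin_cases i <;> simp [epsCoord, hq.1, hq.2] <;> norm_num
  have hfix : ∀ i, σ i = i ∧ t i = 0 := by
    intro i
    have h := ht q i
    rw [hgq, hq', hq'] at h
    have h' : ((σ i : ℕ) : ℤ) - (i : ℕ) = 3 * t i := by
      exact_mod_cast (show ((σ i : ℕ) : ℝ) - (i : ℕ) = 3 * t i by linarith)
    have := (σ i).isLt
    have := i.isLt
    exact ⟨Fin.ext (by omega), by omega⟩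
  refine Equiv.ext fun v => ?_
  have he : ∀ i, epsCoord a1 a2 (g v) i = epsCoord a1 a2 v i := fun i => by
    rw [ht, (hfix i).1, (hfix i).2, Int.cast_zero, add_zero]
  refine hA.ext_of_inner ?_ ?_
  · rw [inner_a1_eq_epsCoord, inner_a1_eq_epsCoord, he, he]; rfl
  · rw [inner_a2_eq_epsCoord, inner_a2_eq_epsCoord, he, he]; rfl

end IsPermTranslation

lemma AffWeyl.eq_one_of_act_eq {a1 a2 q : V} (hA : IsA2Basis a1 a2)
    (hq : AlcoveCoords a1 a2 q 0 0 1) {w : AffWeyl a1 a2} (hw : act w q = q) : w = 1 :=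
  Subtype.ext <| IsPermTranslation.eq_one_of_apply_eq hA hq
    (AffWeyl.induction hA .one (fun _ _ => .mul) (fun _ => .of_isAffRefl hA) w.2) hw

lemma act_mul {a1 a2 : V} (u w : AffWeyl a1 a2) (v : V) : act (u * w) v = act u (act w v) := rfl

lemma IsSimpleRefl.exists_simpleHyperplane {a1 a2 : V} {g : Equiv.Perm V}
    (hg : IsSimpleRefl a1 a2 g) :
    ∃ δ ε, IsSimpleHyperplane a1 a2 δ ε ∧ ∀ v, g v = sRefl δ ε v := by
  rcases hg with h | h | h
  exacts [⟨a1, 0, Or.inl ⟨rfl, rfl⟩, h⟩, ⟨a2, 0, Or.inr (Or.inl ⟨rfl, rfl⟩), h⟩,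
    ⟨a1 + a2, 1, Or.inr (Or.inr ⟨rfl, rfl⟩), h⟩]

lemma IsSimpleHyperplane.mem_posRoots {a1 a2 δ : V} {ε : ℤ} (h : IsSimpleHyperplane a1 a2 δ ε) :
    δ ∈ PosRoots a1 a2 := by
  rcases h with ⟨rfl, -⟩ | ⟨rfl, -⟩ | ⟨rfl, -⟩ <;> simp [PosRoots]

lemma IsSimpleRefl.isAffRefl {a1 a2 : V} {g : Equiv.Perm V} (hg : IsSimpleRefl a1 a2 g) :
    IsAffRefl a1 a2 g :=
  let ⟨δ, ε, h, hg⟩ := hg.exists_simpleHyperplane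
  ⟨δ, Or.inl h.mem_posRoots, ε, hg⟩

lemma IsSimpleHyperplane.exists_affWeyl {a1 a2 δ : V} {ε : ℤ} (hA : IsA2Basis a1 a2)
    (h : IsSimpleHyperplane a1 a2 δ ε) :
    ∃ s : AffWeyl a1 a2, IsSimpleRefl a1 a2 s ∧ ∀ v, act s v = sRefl δ ε v := by
  refine ⟨⟨(sRefl_involutive (hA.inner_self_of_mem_posRoots h.mem_posRoots) ε).toPerm,
    Subgroup.subset_closure ⟨δ, Or.inl h.mem_posRoots, ε, fun _ => rfl⟩⟩, ?_, fun _ => rfl⟩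
  rcases h with ⟨rfl, rfl⟩ | ⟨rfl, rfl⟩ | ⟨rfl, rfl⟩
  exacts [Or.inl fun _ => rfl, Or.inr (Or.inl fun _ => rfl), Or.inr (Or.inr fun _ => rfl)]

lemma AffWeyl.mul_self_eq_one {a1 a2 : V} (hA : IsA2Basis a1 a2) {r : AffWeyl a1 a2}
    (hr : IsAffRefl a1 a2 r) : r * r = 1 := by
  obtain ⟨α, hα, k, hk⟩ := hr
  refine Subtype.ext (Equiv.ext fun v => ?_)
  simp only [Subgroup.coe_mul, Equiv.Perm.mul_apply, hk, OneMemClass.coe_one,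
    Equiv.Perm.one_apply]
  exact sRefl_involutive (hA.inner_self_of_mem_phi hα) k v

section Length

variable {a1 a2 q : V} (hA : IsA2Basis a1 a2) (hq : AlcoveCoords a1 a2 q 0 0 1)
include hA hq

lemma isAlcoveCenter_act (w : AffWeyl a1 a2) : IsAlcoveCenter a1 a2 (act w q) :=
  isAlcoveCenter_apply hA w.2 ⟨0, 0, 1, Or.inl rfl, hq⟩

lemma sepCount_act_prod_le_length (l : List (AffWeyl a1 a2))
    (hl : ∀ g ∈ l, IsSimpleRefl a1 a2 g) : sepCount a1 a2 (act l.prod q) ≤ l.length := by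
  induction l with
  | nil => simp [act, hq.sepCount_eq (Or.inl rfl)]
  | cons g l ih =>
    obtain ⟨δ, ε, hδε, hg⟩ := (hl g List.mem_cons_self).exists_simpleHyperplane
    have hle := sepCount_sRefl_le hA hδε (isAlcoveCenter_act hA hq l.prod)
    have ih := ih fun g hg => hl g (List.mem_cons_of_mem _ hg)
    rw [List.prod_cons, act_mul, act, hg, List.length_cons]
    omega

lemma exists_word_of_sepCount_eq : ∀ (n : ℕ) (w : AffWeyl a1 a2),
    sepCount a1 a2 (act w q) = n →
      ∃ l : List (AffWeyl a1 a2), (∀ g ∈ l, IsSimpleRefl a1 a2 g) ∧ l.length = n ∧ l.prod = w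
  | 0, w, hw => ⟨[], by simp, rfl, (AffWeyl.eq_one_of_act_eq hA hq
      ((isAlcoveCenter_act hA hq w).eq_of_sepCount_eq_zero hA hq hw)).symm⟩
  | n + 1, w, hw => by
    obtain ⟨δ, ε, hδε, hsep⟩ := (isAlcoveCenter_act hA hq w).exists_simpleHyperplane (by omega)
    obtain ⟨s, hs, hsv⟩ := hδε.exists_affWeyl hA
    have hdrop := sepCount_sRefl_add_one hA hδε (isAlcoveCenter_act hA hq w) hsep
    obtain ⟨l, hl, hlen, hprod⟩ :=
      exists_word_of_sepCount_eq n (s * w) (by rw [act_mul, hsv]; omega)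
    refine ⟨s :: l, ?_, by rw [List.length_cons, hlen], ?_⟩
    · exact List.forall_mem_cons.2 ⟨hs, hl⟩
    · rw [List.prod_cons, hprod, ← mul_assoc, AffWeyl.mul_self_eq_one hA hs.isAffRefl, one_mul]

lemma len_eq_sepCount (w : AffWeyl a1 a2) : len a1 a2 w = sepCount a1 a2 (act w q) := by
  obtain ⟨l, hl, hlen, hw⟩ := exists_word_of_sepCount_eq hA hq _ w rfl
  refine le_antisymm (hlen ▸ Nat.sInf_le ⟨l, hl, rfl, hw⟩) ?_
  obtain ⟨l', hl', hlen', hw'⟩ : len a1 a2 w ∈ {n | ∃ l : List (AffWeyl a1 a2),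
      (∀ g ∈ l, IsSimpleRefl a1 a2 g) ∧ l.length = n ∧ l.prod = w} :=
    Nat.sInf_mem ⟨_, l, hl, rfl, hw⟩
  rw [← hlen', ← hw']
  exact sepCount_act_prod_le_length hA hq l' hl'

end Length

/-- The component of `ℝ ∖ [0, 1]` containing `t`, when `t ∉ [0, 1]`. -/
def stripSide (t : ℝ) : Set ℝ := if t < 0 then Iio 0 else Ioi 1

def chamberAt (a1 a2 v : V) : Set V :=
  ⋂ β ∈ PosRoots a1 a2, (fun w => ⟪β, w⟫) ⁻¹' stripSide ⟪β, v⟫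

lemma continuous_inner_left (β : V) : Continuous fun w : V => ⟪β, w⟫ :=
  continuous_const.inner continuous_id

lemma isOpen_stripSide (t : ℝ) : IsOpen (stripSide t) := by
  unfold stripSide; split_ifs; exacts [isOpen_Iio, isOpen_Ioi]

lemma convex_stripSide (t : ℝ) : Convex ℝ (stripSide t) := by
  unfold stripSide; split_ifs; exacts [convex_Iio 0, convex_Ioi 1]

lemma closure_stripSide (t : ℝ) : closure (stripSide t) = if t < 0 then Iic 0 else Ici 1 := by
  unfold stripSide; split_ifs <;> simp

lemma mem_stripSide_self {t : ℝ} : t ∈ stripSide t ↔ t ∉ Icc 0 1 := by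
  unfold stripSide; split_ifs with h
  · simp [h, h.not_ge]
  · simp [not_lt.1 h]

lemma stripSide_subset (t : ℝ) : stripSide t ⊆ (Icc 0 1)ᶜ := by
  unfold stripSide; split_ifs
  · exact fun s hs hs' => (mem_Iio.1 hs).not_ge hs'.1
  · exact fun s hs hs' => (mem_Ioi.1 hs).not_ge hs'.2

@[simp] lemma zero_mem_closure_stripSide {t : ℝ} : (0 : ℝ) ∈ closure (stripSide t) ↔ t < 0 := by
  rw [closure_stripSide]; split_ifs with h <;> simp [h]

@[simp] lemma one_mem_closure_stripSide {t : ℝ} : (1 : ℝ) ∈ closure (stripSide t) ↔ 0 ≤ t := by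
  rw [closure_stripSide]; split_ifs with h
  · simp [h.not_ge]
  · simp [not_lt.1 h]

lemma openSegment_subset_preimage_inner {U : Set ℝ} (hUc : Convex ℝ U) (hUo : IsOpen U)
    {β p v : V} (hp : ⟪β, p⟫ ∈ closure U) (hv : ⟪β, v⟫ ∈ U) :
    openSegment ℝ p v ⊆ (fun w => ⟪β, w⟫) ⁻¹' U := by
  rw [← image_subset_iff]
  have := image_openSegment ℝ (innerₛₗ ℝ β).toAffineMap p v
  simp only [LinearMap.coe_toAffineMap, coe_innerₛₗ_apply] at this
  rw [this]
  simpa [hUo.interior_eq] using hUc.openSegment_closure_interior_subset_interior hp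
    (hUo.interior_eq.symm ▸ hv)

section Chambers

variable {a1 a2 v : V}

lemma mem_stripUnion_iff : v ∈ StripUnion a1 a2 ↔ ∃ β ∈ PosRoots a1 a2, ⟪β, v⟫ ∈ Icc 0 1 := by
  simp [StripUnion, Strip, PosRoots, or_assoc]

lemma floor_inner_ne_zero_of_not_mem_stripUnion (hv : v ∉ StripUnion a1 a2) {β : V}
    (hβ : β ∈ PosRoots a1 a2) : ⌊⟪β, v⟫⌋ ≠ 0 := by
  have : ⟪β, v⟫ < 0 ∨ 1 < ⟪β, v⟫ := by
    by_contra! h; exact hv (mem_stripUnion_iff.2 ⟨β, hβ, h⟩)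
  rcases this with h | h
  · exact (Int.floor_lt_zero.2 h).ne
  · exact (Int.floor_pos.2 h.le).ne'

lemma mem_chamberAt {w : V} :
    w ∈ chamberAt a1 a2 v ↔ ∀ β ∈ PosRoots a1 a2, ⟪β, w⟫ ∈ stripSide ⟪β, v⟫ := by
  simp [chamberAt]

lemma mem_chamberAt_self : v ∈ chamberAt a1 a2 v ↔ v ∉ StripUnion a1 a2 := by
  simp [mem_chamberAt, mem_stripSide_self, mem_stripUnion_iff]

lemma chamberAt_subset_compl : chamberAt a1 a2 v ⊆ (StripUnion a1 a2)ᶜ := fun w hw hw' => by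
  obtain ⟨β, hβ, h⟩ := mem_stripUnion_iff.1 hw'
  exact stripSide_subset _ (mem_chamberAt.1 hw β hβ) h

lemma convex_chamberAt : Convex ℝ (chamberAt a1 a2 v) :=
  convex_iInter₂ fun β _ => (convex_stripSide _).linear_preimage (innerₛₗ ℝ β)

lemma closure_chamberAt (hv : v ∉ StripUnion a1 a2) :
    closure (chamberAt a1 a2 v) =
      ⋂ β ∈ PosRoots a1 a2, (fun w => ⟪β, w⟫) ⁻¹' closure (stripSide ⟪β, v⟫) := by
  refine Subset.antisymm (closure_minimal (iInter₂_mono fun β _ => preimage_mono subset_closure)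
    (isClosed_biInter fun β _ => isClosed_closure.preimage (continuous_inner_left β))) ?_
  intro p hp
  have hseg : openSegment ℝ p v ⊆ chamberAt a1 a2 v := fun w hw => mem_iInter₂.2 fun β hβ =>
    openSegment_subset_preimage_inner (convex_stripSide _) (isOpen_stripSide _)
      (mem_iInter₂.1 hp β hβ) (mem_chamberAt.1 (mem_chamberAt_self.2 hv) β hβ) hw
  exact closure_mono hseg (segment_subset_closure_openSegment (left_mem_segment ℝ p v))

lemma mem_closure_chamberAt_iff (hv : v ∉ StripUnion a1 a2) {p : V} :
    p ∈ closure (chamberAt a1 a2 v) ↔ ⟪a1, p⟫ ∈ closure (stripSide ⟪a1, v⟫) ∧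
      ⟪a2, p⟫ ∈ closure (stripSide ⟪a2, v⟫) ∧ ⟪a1 + a2, p⟫ ∈ closure (stripSide ⟪a1 + a2, v⟫) := by
  simp [closure_chamberAt hv, PosRoots]

lemma connectedComponentIn_eq_chamberAt (hv : v ∉ StripUnion a1 a2) :
    connectedComponentIn (StripUnion a1 a2)ᶜ v = chamberAt a1 a2 v := by
  refine Subset.antisymm (subset_iInter₂ fun β hβ => ?_)
    (convex_chamberAt.isPreconnected.subset_connectedComponentIn (mem_chamberAt_self.2 hv)
      chamberAt_subset_compl)
  have hK : connectedComponentIn (StripUnion a1 a2)ᶜ v ⊆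
      (fun w => ⟪β, w⟫) ⁻¹' Iio 0 ∪ (fun w => ⟪β, w⟫) ⁻¹' Ioi 1 := fun w hw => by
    have := mem_chamberAt_self.2 (connectedComponentIn_subset _ _ hw)
    have := mem_chamberAt.1 this β hβ
    unfold stripSide at this; split_ifs at this
    exacts [Or.inl this, Or.inr this]
  have hvK := mem_connectedComponentIn (F := (StripUnion a1 a2)ᶜ) hv
  have hvβ := mem_chamberAt.1 (mem_chamberAt_self.2 hv) β hβ
  have hψ := continuous_inner_left β
  have hdisj : Disjoint ((fun w => ⟪β, w⟫) ⁻¹' Ioi (1 : ℝ)) ((fun w => ⟪β, w⟫) ⁻¹' Iio 0) :=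
    (Ioi_disjoint_Iio_of_le zero_le_one).preimage _
  unfold stripSide at hvβ ⊢; split_ifs at hvβ ⊢
  · exact isPreconnected_connectedComponentIn.subset_left_of_subset_union
      (isOpen_Iio.preimage hψ) (isOpen_Ioi.preimage hψ) hdisj.symm hK ⟨v, hvK, hvβ⟩
  · exact isPreconnected_connectedComponentIn.subset_left_of_subset_union
      (isOpen_Ioi.preimage hψ) (isOpen_Iio.preimage hψ) hdisj (union_comm _ _ ▸ hK) ⟨v, hvK, hvβ⟩

lemma IsChamber.eq_chamberAt {C : Set V} (hC : IsChamber a1 a2 C) (hv : v ∈ C) :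
    C = chamberAt a1 a2 v := by
  obtain ⟨v₀, -, rfl⟩ := hC
  rw [connectedComponentIn_eq hv,
    connectedComponentIn_eq_chamberAt (connectedComponentIn_subset _ _ hv)]

end Chambers

lemma closure_A0 {a1 a2 q : V} (hq : q ∈ A0 a1 a2) :
    closure (A0 a1 a2) = {v | 0 ≤ ⟪a1, v⟫ ∧ 0 ≤ ⟪a2, v⟫ ∧ ⟪a1 + a2, v⟫ ≤ 1} := by
  refine Subset.antisymm (closure_minimal (fun v hv => ⟨hv.1.le, hv.2.1.le, hv.2.2.le⟩) ?_) ?_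
  · exact (isClosed_le continuous_const (continuous_inner_left a1)).inter
      ((isClosed_le continuous_const (continuous_inner_left a2)).inter
        (isClosed_le (continuous_inner_left _) continuous_const))
  · rintro p ⟨h1, h2, h3⟩
    have hseg : openSegment ℝ p q ⊆ A0 a1 a2 := fun w hw =>
      ⟨openSegment_subset_preimage_inner (convex_Ioi 0) isOpen_Ioi (by simpa using h1) hq.1 hw,
        openSegment_subset_preimage_inner (convex_Ioi 0) isOpen_Ioi (by simpa using h2) hq.2.1 hw,
        openSegment_subset_preimage_inner (convex_Iio 1) isOpen_Iio (by simpa using h3) hq.2.2 hw⟩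
    exact closure_mono hseg (segment_subset_closure_openSegment (left_mem_segment ℝ p q))

lemma mem_closure_A0_iff {a1 a2 q v : V} (hq : q ∈ A0 a1 a2) :
    v ∈ closure (A0 a1 a2) ↔ 0 ≤ ⟪a1, v⟫ ∧ 0 ≤ ⟪a2, v⟫ ∧ ⟪a1, v⟫ + ⟪a2, v⟫ ≤ 1 := by
  rw [closure_A0 hq, mem_ofPred_eq, inner_add_left]

lemma inner_mem_Icc_of_mem_closure_A0 {a1 a2 q p β : V} (hq : q ∈ A0 a1 a2)
    (hp : p ∈ closure (A0 a1 a2)) (hβ : β ∈ PosRoots a1 a2) : ⟪β, p⟫ ∈ Icc 0 1 := by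
  obtain ⟨h1, h2, h3⟩ := (mem_closure_A0_iff hq).1 hp
  rcases hβ with rfl | rfl | rfl
  · exact ⟨h1, by linarith⟩
  · exact ⟨h2, by linarith⟩
  · rw [inner_add_left]; exact ⟨by linarith, h3⟩

def fundWeight₁ (a1 a2 : V) : V := (2 / 3 : ℝ) • a1 + (1 / 3 : ℝ) • a2

def fundWeight₂ (a1 a2 : V) : V := (1 / 3 : ℝ) • a1 + (2 / 3 : ℝ) • a2

namespace IsA2Basis

variable {a1 a2 : V} (hA : IsA2Basis a1 a2)
include hA

lemma inner_fundWeight₁ : ⟪a1, fundWeight₁ a1 a2⟫ = 1 ∧ ⟪a2, fundWeight₁ a1 a2⟫ = 0 := by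
  simp only [fundWeight₁, inner_add_right, real_inner_smul_right, hA.inner_a1_a1, hA.inner_a2_a2,
    hA.inner_a1_a2, hA.inner_a2_a1]
  constructor <;> norm_num

lemma inner_fundWeight₂ : ⟪a1, fundWeight₂ a1 a2⟫ = 0 ∧ ⟪a2, fundWeight₂ a1 a2⟫ = 1 := by
  simp only [fundWeight₂, inner_add_right, real_inner_smul_right, hA.inner_a1_a1, hA.inner_a2_a2,
    hA.inner_a1_a2, hA.inner_a2_a1]
  constructor <;> norm_num

variable {q : V} (hq : q ∈ A0 a1 a2)
include hq

lemma hplane_a1_one_inter_closure_A0 :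
    Hplane a1 1 ∩ closure (A0 a1 a2) = {fundWeight₁ a1 a2} := by
  obtain ⟨w1, w2⟩ := hA.inner_fundWeight₁
  ext v
  simp only [Hplane, mem_inter_iff, mem_ofPred_eq, mem_closure_A0_iff hq, mem_singleton_iff,
    Int.cast_one]
  constructor
  · rintro ⟨h1, -, h2, h3⟩
    exact hA.ext_of_inner (by rw [h1, w1]) (by rw [w2]; linarith)
  · rintro rfl; rw [w1, w2]; norm_num

lemma hplane_a2_one_inter_closure_A0 :
    Hplane a2 1 ∩ closure (A0 a1 a2) = {fundWeight₂ a1 a2} := by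
  obtain ⟨w1, w2⟩ := hA.inner_fundWeight₂
  ext v
  simp only [Hplane, mem_inter_iff, mem_ofPred_eq, mem_closure_A0_iff hq, mem_singleton_iff,
    Int.cast_one]
  constructor
  · rintro ⟨h1, h2, -, h3⟩
    exact hA.ext_of_inner (by rw [w1]; linarith) (by rw [h1, w2])
  · rintro rfl; rw [w1, w2]; norm_num

lemma hplane_a1_add_a2_zero_inter_closure_A0 :
    Hplane (a1 + a2) 0 ∩ closure (A0 a1 a2) = {0} := by
  ext v
  simp only [Hplane, mem_inter_iff, mem_ofPred_eq, mem_closure_A0_iff hq, mem_singleton_iff,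
    Int.cast_zero, inner_add_left]
  constructor
  · rintro ⟨h0, h1, h2, -⟩
    exact hA.ext_of_inner (by rw [inner_zero_right]; linarith) (by rw [inner_zero_right]; linarith)
  · rintro rfl; simp

end IsA2Basis

section VertexCondition

variable {a1 a2 q v : V} (hq : q ∈ A0 a1 a2)
include hq

lemma IsSimpleHyperplane.not_exists_inter_closure_A0_eq_singleton (hA : IsA2Basis a1 a2)
    {δ : V} {ε : ℤ} (h : IsSimpleHyperplane a1 a2 δ ε) :
    ¬∃ p, Hplane δ ε ∩ closure (A0 a1 a2) = {p} := by
  rintro ⟨p, hp⟩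
  have key : ∀ u w, u ∈ Hplane δ ε ∩ closure (A0 a1 a2) → w ∈ Hplane δ ε ∩ closure (A0 a1 a2) →
      ⟪a1, u⟫ = ⟪a1, w⟫ ∧ ⟪a2, u⟫ = ⟪a2, w⟫ := by
    rw [hp]; rintro u w rfl rfl; exact ⟨rfl, rfl⟩
  simp only [Hplane, mem_inter_iff, mem_ofPred_eq, mem_closure_A0_iff hq] at key
  obtain ⟨w1, w2⟩ := hA.inner_fundWeight₁
  obtain ⟨u1, u2⟩ := hA.inner_fundWeight₂
  rcases h with ⟨hδ, rfl⟩ | ⟨hδ, rfl⟩ | ⟨hδ, rfl⟩ <;> subst δ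
  · have := key 0 (fundWeight₂ a1 a2) (by simp) (by simp [u1, u2])
    simp [u2] at this
  · have := key 0 (fundWeight₁ a1 a2) (by simp) (by simp [w1, w2])
    simp [w1] at this
  · have := key (fundWeight₁ a1 a2) (fundWeight₂ a1 a2) (by simp [inner_add_left, w1, w2])
      (by simp [inner_add_left, u1, u2])
    simp [w1, u1] at this

lemma mem_hplane_of_isWall (hv : v ∉ StripUnion a1 a2) {p α : V} {i : ℤ}
    (hpA : p ∈ closure (A0 a1 a2)) (hpC : p ∈ closure (chamberAt a1 a2 v))
    (hw : IsWall a1 a2 (chamberAt a1 a2 v) α i) : p ∈ Hplane α i := by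
  obtain ⟨hα, hi, u, ⟨hu, hui⟩, -⟩ := hw
  rw [closure_chamberAt hv] at hpC
  have hu := (closure_chamberAt hv ▸ frontier_subset_closure hu : u ∈ _)
  have hpα := mem_iInter₂.1 hpC α hα
  have huα := mem_iInter₂.1 hu α hα
  have hpI := inner_mem_Icc_of_mem_closure_A0 hq hpA hα
  simp only [Hplane, mem_ofPred_eq] at hui ⊢
  simp only [mem_preimage, closure_stripSide, hui] at hpα huα
  -- `⟪α, p⟫ ∈ [0, 1]` and `i ∈ {0, 1}` lie in the same closed half-line `Iic 0` or `Ici 1`.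
  split_ifs at hpα huα <;> rcases hi with rfl | rfl <;> simp at hpα huα hpI ⊢ <;>
    linarith [hpI.1, hpI.2]

lemma vertexCondition_iff (hv : v ∉ StripUnion a1 a2) (δ : V) (ε : ℤ) :
    (∃ p, Hplane δ ε ∩ closure (A0 a1 a2) = {p} ∧ p ∈ closure (chamberAt a1 a2 v) ∧
        ∀ α i, IsWall a1 a2 (chamberAt a1 a2 v) α i → p ∈ Hplane α i) ↔
      ∃ p, Hplane δ ε ∩ closure (A0 a1 a2) = {p} ∧ p ∈ closure (chamberAt a1 a2 v) := by
  refine ⟨fun ⟨p, hE, hp, _⟩ => ⟨p, hE, hp⟩, fun ⟨p, hE, hp⟩ => ⟨p, hE, hp, fun α i => ?_⟩⟩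
  have hpA : p ∈ Hplane δ ε ∩ closure (A0 a1 a2) := hE ▸ mem_singleton p
  exact mem_hplane_of_isWall hq hv hpA.2 hp

end VertexCondition

open Classical in
lemma sepCount_sRefl_add_of_separated {a1 a2 q v δ : V} {ε : ℤ} (hA : IsA2Basis a1 a2)
    (hq : q ∈ A0 a1 a2) (hδ : δ ∈ PosRoots a1 a2) (hv : IsAlcoveCenter a1 a2 v)
    (hoff : v ∉ StripUnion a1 a2) (hs : SeparatedFromA0 δ ε v) :
    sepCount a1 a2 (sRefl δ ε v) +
        (if ∃ p, Hplane δ ε ∩ closure (A0 a1 a2) = {p} ∧ p ∈ closure (chamberAt a1 a2 v)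
          then 3 else 1) = sepCount a1 a2 v := by
  by_cases hsimple : IsSimpleHyperplane a1 a2 δ ε
  · rw [if_neg fun ⟨p, hp, _⟩ => hsimple.not_exists_inter_closure_A0_eq_singleton hq hA ⟨p, hp⟩]
    exact sepCount_sRefl_add_one hA hsimple hv hs
  obtain ⟨m, n, c, hc, h⟩ := hv
  have h1 := floor_inner_ne_zero_of_not_mem_stripUnion hoff (β := a1) (by simp [PosRoots])
  have h2 := floor_inner_ne_zero_of_not_mem_stripUnion hoff (β := a2) (by simp [PosRoots])
  have h3 := floor_inner_ne_zero_of_not_mem_stripUnion hoff (β := a1 + a2) (by simp [PosRoots])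
  have hfl := hs.floor
  simp only [mem_closure_chamberAt_iff hoff, h.floor_a1 hc, h.floor_a2 hc,
    h.floor_a1_add_a2 hc] at h1 h2 h3 ⊢
  obtain ⟨w1, w2⟩ := hA.inner_fundWeight₁
  obtain ⟨u1, u2⟩ := hA.inner_fundWeight₂
  rcases hδ with hδ | hδ | hδ <;> subst δ <;> rcases hfl with ⟨rfl, hfl⟩ | ⟨rfl, hfl⟩ <;>
    simp only [h.floor_a1 hc, h.floor_a2 hc, h.floor_a1_add_a2 hc] at hfl
  · exact absurd (Or.inl ⟨rfl, rfl⟩) hsimple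
  · have w3 : ⟪a1 + a2, fundWeight₁ a1 a2⟫ = 1 := by rw [inner_add_left, w1, w2, add_zero]
    simp only [hA.hplane_a1_one_inter_closure_A0 hq, singleton_eq_singleton_iff, exists_eq_left',
      w1, w2, w3, one_mem_closure_stripSide, zero_mem_closure_stripSide,
      ← Int.floor_nonneg (a := ⟪a1, v⟫), ← Int.floor_lt_zero (a := ⟪a2, v⟫),
      ← Int.floor_nonneg (a := ⟪a1 + a2, v⟫), h.floor_a1 hc, h.floor_a2 hc,
      h.floor_a1_add_a2 hc]
    rw [(h.sRefl_a1 hA 1).sepCount_eq (by omega), h.sepCount_eq hc]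
    split_ifs <;> omega
  · exact absurd (Or.inr (Or.inl ⟨rfl, rfl⟩)) hsimple
  · have u3 : ⟪a1 + a2, fundWeight₂ a1 a2⟫ = 1 := by rw [inner_add_left, u1, u2, zero_add]
    simp only [hA.hplane_a2_one_inter_closure_A0 hq, singleton_eq_singleton_iff, exists_eq_left',
      u1, u2, u3, one_mem_closure_stripSide, zero_mem_closure_stripSide,
      ← Int.floor_lt_zero (a := ⟪a1, v⟫), ← Int.floor_nonneg (a := ⟪a2, v⟫),
      ← Int.floor_nonneg (a := ⟪a1 + a2, v⟫), h.floor_a1 hc, h.floor_a2 hc,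
      h.floor_a1_add_a2 hc]
    rw [(h.sRefl_a2 hA 1).sepCount_eq (by omega), h.sepCount_eq hc]
    split_ifs <;> omega
  · simp only [hA.hplane_a1_add_a2_zero_inter_closure_A0 hq, singleton_eq_singleton_iff,
      exists_eq_left', inner_zero_right, zero_mem_closure_stripSide,
      ← Int.floor_lt_zero (a := ⟪a1, v⟫), ← Int.floor_lt_zero (a := ⟪a2, v⟫),
      ← Int.floor_lt_zero (a := ⟪a1 + a2, v⟫), h.floor_a1 hc, h.floor_a2 hc,
      h.floor_a1_add_a2 hc]
    rw [(h.sRefl_a1_add_a2 hA 0).sepCount_eq (by omega), h.sepCount_eq hc]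
    split_ifs <;> omega
  · exact absurd (Or.inr (Or.inr ⟨rfl, rfl⟩)) hsimple

lemma bruhatLT_mul_of_len_lt {a1 a2 : V} (hA : IsA2Basis a1 a2) {r z : AffWeyl a1 a2}
    (hr : IsReflW a1 a2 r) (h : len a1 a2 (r * z) < len a1 a2 z) : BruhatLT a1 a2 (r * z) z := by
  refine ⟨.single ⟨r, hr, ?_, h⟩, fun heq => (heq ▸ h).false⟩
  rw [← mul_assoc, AffWeyl.mul_self_eq_one hA hr, one_mul]

/-- **Lemma.** Let `E = H_{δ,ε}` be an edge of the fundamental `δ`-root strip, `𝒞` a chamber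
on the opposite side of `E` from the strip, `z ∈ W` with `z q ∈ 𝒞`, and `z' = s_{δ,ε} z`.
Then `ℓ(z') < ℓ(z)`, so `z' < z`; more precisely `ℓ(z') = ℓ(z) − 3` if `E ∩ cl(A₀)` is a single
point equal to the vertex of `𝒞`, and `ℓ(z') = ℓ(z) − 1` otherwise. -/
theorem length_reflect_across_strip_edge
    (a1 a2 q : V)
    (hnorm1 : ⟪a1, a1⟫ = 2) (hnorm2 : ⟪a2, a2⟫ = 2) (hip : ⟪a1, a2⟫ = -1)
    (hq1 : ⟪a1, q⟫ = 1/3) (hq2 : ⟪a2, q⟫ = 1/3)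
    (δ : V) (hδ : δ ∈ PosRoots a1 a2) (ε : ℤ) (hε : ε = 0 ∨ ε = 1)
    (C : Set V) (hC : IsChamber a1 a2 C)
    (hside1 : ε = 1 → ∀ v ∈ C, 1 < ⟪δ, v⟫)
    (hside0 : ε = 0 → ∀ v ∈ C, ⟪δ, v⟫ < 0)
    (z : AffWeyl a1 a2) (hz : act z q ∈ C)
    (r : AffWeyl a1 a2) (hr : ∀ v : V, act r v = sRefl δ ε v) :
    len a1 a2 (r * z) < len a1 a2 z ∧ BruhatLT a1 a2 (r * z) z ∧
    ((∃ p : V, Hplane δ ε ∩ closure (A0 a1 a2) = {p} ∧ p ∈ closure C ∧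
        ∀ α i, IsWall a1 a2 C α i → p ∈ Hplane α i) →
      len a1 a2 (r * z) + 3 = len a1 a2 z) ∧
    ((¬ ∃ p : V, Hplane δ ε ∩ closure (A0 a1 a2) = {p} ∧ p ∈ closure C ∧
        ∀ α i, IsWall a1 a2 C α i → p ∈ Hplane α i) →
      len a1 a2 (r * z) + 1 = len a1 a2 z) := by
  classical
  have hA : IsA2Basis a1 a2 := ⟨hnorm1, hnorm2, hip⟩
  have hqc : AlcoveCoords a1 a2 q 0 0 1 := ⟨by rw [hq1]; norm_num, by rw [hq2]; norm_num⟩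
  have hqA : q ∈ A0 a1 a2 :=
    ⟨by rw [hq1]; norm_num, by rw [hq2]; norm_num, by rw [inner_add_left, hq1, hq2]; norm_num⟩
  have hCz : C = chamberAt a1 a2 (act z q) := hC.eq_chamberAt hz
  have hoff : act z q ∉ StripUnion a1 a2 := mem_chamberAt_self.1 (hCz ▸ hz)
  have hsep : SeparatedFromA0 δ ε (act z q) := by
    rcases hε with rfl | rfl
    exacts [Or.inl ⟨rfl, hside0 rfl _ hz⟩, Or.inr ⟨rfl, hside1 rfl _ hz⟩]
  have hdrop : len a1 a2 (r * z) + (if ∃ p : V, Hplane δ ε ∩ closure (A0 a1 a2) = {p} ∧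
      p ∈ closure C ∧ ∀ α i, IsWall a1 a2 C α i → p ∈ Hplane α i then 3 else 1) =
        len a1 a2 z := by
    rw [len_eq_sepCount hA hqc, len_eq_sepCount hA hqc, act_mul, hr, hCz,
      vertexCondition_iff hqA hoff]
    exact sepCount_sRefl_add_of_separated hA hqA hδ (isAlcoveCenter_act hA hqc z) hoff hsep
  have hlt : len a1 a2 (r * z) < len a1 a2 z := by split_ifs at hdrop <;> omega
  exact ⟨hlt, bruhatLT_mul_of_len_lt hA ⟨δ, Or.inl hδ, ε, hr⟩ hlt,
    fun h => by rwa [if_pos h] at hdrop, fun h => by rwa [if_neg h] at hdrop⟩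
end
end

section
/- Let w ∈ W be a non-spiral element of the affine Weyl group of type Ã₂, and let w′ = t(α)w be the translation of w into its chamber (α the unique root pointing into the chamber of w). Then w < w′ in the Bruhat order, and ℓ(w′) = ℓ(w) + 4. -/
noncomputable section

open scoped RealInnerProductSpace

/-!
The length of `w` is the number of walls separating `wA₀` from `A₀`, that is
`ℓ(w) = ∑_{β > 0} |⌊⟪β, wq⟫⌋|`: simple reflections change this count by one, and it can be
brought down to `0` by simple reflections, at which point `wq = q`. That this forces `w = 1`
comes from the fact that every element of `W` acts on root coordinates as a matrix of the finite
Weyl group followed by a root lattice translation.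

If `w` is non-spiral and `α` points into its chamber, then for every positive root `β` the number
`⟪β, α⟫` has the sign of the side of the `β`-strip on which `wq` lies (otherwise the points
`wq + nα` would eventually cross that strip). Hence translating by `α` moves `wq` away from every
family of walls and crosses `∑_{β > 0} |⟪β, α⟫| = 4` walls. Writing `t(α) = s_{α,k+1} s_{α,k}`
with `k = ⌊⟪α, wq⟫⌋ + 1`, both reflections also move `wq` outwards and each crosses a wall
parallel to `α`, so the length increases strictly at both steps, giving `w < t(α) w`.
-/

namespace AffineWeylA2

structure IsA2Base (a1 a2 : V) : Prop where
  inner_a1_self : ⟪a1, a1⟫ = 2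
  inner_a2_self : ⟪a2, a2⟫ = 2
  inner_a1_a2 : ⟪a1, a2⟫ = -1

variable {a1 a2 : V}

lemma a1_mem_PosRoots : a1 ∈ PosRoots a1 a2 := by simp [PosRoots]
lemma a2_mem_PosRoots : a2 ∈ PosRoots a1 a2 := by simp [PosRoots]
lemma add_mem_PosRoots : a1 + a2 ∈ PosRoots a1 a2 := by simp [PosRoots]

lemma mem_Phi_iff {α : V} : α ∈ Phi a1 a2 ↔ ∃ β ∈ PosRoots a1 a2, α = β ∨ α = -β := by
  refine ⟨fun h => ?_, ?_⟩
  · rcases h with h | h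
    · exact ⟨α, h, Or.inl rfl⟩
    · exact ⟨-α, h, Or.inr (neg_neg α).symm⟩
  · rintro ⟨β, hβ, rfl | rfl⟩
    · exact Or.inl hβ
    · exact Or.inr (by rwa [neg_neg])

lemma inner_sRefl (β γ : V) (k : ℤ) (v : V) :
    ⟪γ, sRefl β k v⟫ = ⟪γ, v⟫ + (k - ⟪β, v⟫) * ⟪γ, β⟫ := by
  simp only [sRefl, inner_sub_right, inner_smul_right]
  ring

lemma sRefl_neg (β : V) (k : ℤ) : sRefl (-β) k = sRefl β (-k) := by
  ext1 v
  simp only [sRefl, inner_neg_left, smul_neg, Int.cast_neg]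
  module

lemma sRefl_sRefl {α : V} (h : ⟪α, α⟫ = 2) (j k : ℤ) (v : V) :
    sRefl α j (sRefl α k v) = v + ((j : ℝ) - k) • α := by
  simp only [sRefl, inner_sub_right, inner_smul_right, h]
  module

lemma sRefl_add_one_sRefl {α : V} (h : ⟪α, α⟫ = 2) (k : ℤ) (v : V) :
    sRefl α (k + 1) (sRefl α k v) = v + α := by
  simp [sRefl_sRefl h]

lemma sRefl_involutive {α : V} (h : ⟪α, α⟫ = 2) (k : ℤ) : Function.Involutive (sRefl α k) :=
  fun v => by simp [sRefl_sRefl h]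

namespace IsA2Base

lemma inner_a2_a1 (hA : IsA2Base a1 a2) : ⟪a2, a1⟫ = -1 := by
  rw [real_inner_comm]; exact hA.inner_a1_a2

lemma inner_self_of_mem_PosRoots (hA : IsA2Base a1 a2) {β : V} (hβ : β ∈ PosRoots a1 a2) :
    ⟪β, β⟫ = 2 := by
  rcases hβ with rfl | rfl | rfl
  · exact hA.inner_a1_self
  · exact hA.inner_a2_self
  · simp only [inner_add_left, inner_add_right, hA.inner_a1_self, hA.inner_a2_self,
      hA.inner_a1_a2, hA.inner_a2_a1]
    norm_num

lemma inner_self_of_mem_Phi (hA : IsA2Base a1 a2) {α : V} (hα : α ∈ Phi a1 a2) :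
    ⟪α, α⟫ = 2 := by
  rcases hα with h | h
  · exact hA.inner_self_of_mem_PosRoots h
  · simpa using hA.inner_self_of_mem_PosRoots h

lemma linearIndependent (hA : IsA2Base a1 a2) : LinearIndependent ℝ ![a1, a2] := by
  rw [LinearIndependent.pair_iff]
  intro s t hst
  have h1 := congrArg (⟪a1, ·⟫) hst
  have h2 := congrArg (⟪a2, ·⟫) hst
  simp only [inner_add_right, inner_smul_right, inner_zero_right, hA.inner_a1_self,
    hA.inner_a2_self, hA.inner_a1_a2, hA.inner_a2_a1] at h1 h2
  constructor <;> linarith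

lemma ext_inner (hA : IsA2Base a1 a2) {v w : V} (h1 : ⟪a1, v⟫ = ⟪a1, w⟫)
    (h2 : ⟪a2, v⟫ = ⟪a2, w⟫) : v = w := by
  refine InnerProductSpace.ext_inner_left_basis
    (basisOfLinearIndependentOfCardEqFinrank hA.linearIndependent (by simp)) fun i => ?_
  fin_cases i <;> simpa

lemma inner_sRefl_a1 (hA : IsA2Base a1 a2) (k : ℤ) (v : V) :
    ⟪a1, sRefl a1 k v⟫ = ((2 * k : ℤ) : ℝ) - ⟪a1, v⟫ ∧ ⟪a2, sRefl a1 k v⟫ = ⟪a1 + a2, v⟫ - k ∧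
      ⟪a1 + a2, sRefl a1 k v⟫ = ⟪a2, v⟫ + k := by
  simp only [AffineWeylA2.inner_sRefl, inner_add_left, hA.inner_a1_self, hA.inner_a2_a1]
  push_cast
  refine ⟨?_, ?_, ?_⟩ <;> ring

lemma inner_sRefl_a2 (hA : IsA2Base a1 a2) (k : ℤ) (v : V) :
    ⟪a1, sRefl a2 k v⟫ = ⟪a1 + a2, v⟫ - k ∧ ⟪a2, sRefl a2 k v⟫ = ((2 * k : ℤ) : ℝ) - ⟪a2, v⟫ ∧
      ⟪a1 + a2, sRefl a2 k v⟫ = ⟪a1, v⟫ + k := by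
  simp only [AffineWeylA2.inner_sRefl, inner_add_left, hA.inner_a2_self, hA.inner_a1_a2]
  push_cast
  refine ⟨?_, ?_, ?_⟩ <;> ring

lemma inner_sRefl_add (hA : IsA2Base a1 a2) (k : ℤ) (v : V) :
    ⟪a1, sRefl (a1 + a2) k v⟫ = k - ⟪a2, v⟫ ∧ ⟪a2, sRefl (a1 + a2) k v⟫ = k - ⟪a1, v⟫ ∧
      ⟪a1 + a2, sRefl (a1 + a2) k v⟫ = ((2 * k : ℤ) : ℝ) - ⟪a1 + a2, v⟫ := by
  simp only [AffineWeylA2.inner_sRefl, inner_add_left, inner_add_right, hA.inner_a1_self,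
    hA.inner_a2_self, hA.inner_a1_a2, hA.inner_a2_a1]
  push_cast
  refine ⟨?_, ?_, ?_⟩ <;> ring

lemma exists_inner_root_eq_int {α : V} (hA : IsA2Base a1 a2) (hα : α ∈ Phi a1 a2) :
    ∃ m1 m2 m3 : ℤ, ⟪a1, α⟫ = m1 ∧ ⟪a2, α⟫ = m2 ∧ ⟪a1 + a2, α⟫ = m3 ∧
      m1.natAbs + m2.natAbs + m3.natAbs = 4 := by
  have hpos : ∀ β ∈ PosRoots a1 a2, ∃ m1 m2 m3 : ℤ, ⟪a1, β⟫ = m1 ∧ ⟪a2, β⟫ = m2 ∧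
      ⟪a1 + a2, β⟫ = m3 ∧ m1.natAbs + m2.natAbs + m3.natAbs = 4 := by
    rintro β (rfl | rfl | rfl) <;>
      [refine ⟨2, -1, 1, ?_⟩; refine ⟨-1, 2, 1, ?_⟩; refine ⟨1, 1, 2, ?_⟩] <;>
      simp only [inner_add_left, inner_add_right, hA.inner_a1_self, hA.inner_a2_self,
        hA.inner_a1_a2, hA.inner_a2_a1] <;> norm_num
  obtain ⟨β, hβ, rfl | rfl⟩ := mem_Phi_iff.1 hα
  · exact hpos _ hβ
  · obtain ⟨m1, m2, m3, h1, h2, h3, h⟩ := hpos β hβ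
    exact ⟨-m1, -m2, -m3, by simp [h1], by simp [h2], by simp [h3], by simpa⟩

end IsA2Base

def reflection (hA : IsA2Base a1 a2) {α : V} (hα : α ∈ Phi a1 a2) (k : ℤ) : AffWeyl a1 a2 :=
  ⟨(sRefl_involutive (hA.inner_self_of_mem_Phi hα) k).toPerm _,
    Subgroup.subset_closure ⟨α, hα, k, fun _ => rfl⟩⟩

lemma isReflW_reflection (hA : IsA2Base a1 a2) {α : V} (hα : α ∈ Phi a1 a2) (k : ℤ) :
    IsReflW a1 a2 (reflection hA hα k : Equiv.Perm V) :=
  ⟨α, hα, k, fun _ => rfl⟩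

lemma reflection_mul_self (hA : IsA2Base a1 a2) {α : V} (hα : α ∈ Phi a1 a2) (k : ℤ) :
    reflection hA hα k * reflection hA hα k = 1 :=
  Subtype.ext <| Equiv.ext <| sRefl_involutive (hA.inner_self_of_mem_Phi hα) k

lemma bruhatLE_mul_of_len_lt {u r : AffWeyl a1 a2} (hr : IsReflW a1 a2 (r : Equiv.Perm V))
    (h : len a1 a2 u < len a1 a2 (r * u)) : BruhatLE a1 a2 u (r * u) :=
  .single ⟨r, hr, rfl, h⟩

/-- The finite Weyl group of `A₂`, as integer matrices `(a, b, c, d) = [[a, b], [c, d]]` acting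
on the root coordinates `(⟪a1, v⟫, ⟪a2, v⟫)`. -/
def weylMatrices : List (ℤ × ℤ × ℤ × ℤ) :=
  [(1, 0, 0, 1), (-1, 0, 1, 1), (1, 1, 0, -1), (0, -1, -1, 0), (-1, -1, 1, 0), (0, 1, -1, -1)]

def matMul (M N : ℤ × ℤ × ℤ × ℤ) : ℤ × ℤ × ℤ × ℤ :=
  (M.1 * N.1 + M.2.1 * N.2.2.1, M.1 * N.2.1 + M.2.1 * N.2.2.2,
    M.2.2.1 * N.1 + M.2.2.2 * N.2.2.1, M.2.2.1 * N.2.1 + M.2.2.2 * N.2.2.2)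

lemma matMul_mem_weylMatrices :
    ∀ M ∈ weylMatrices, ∀ N ∈ weylMatrices, matMul M N ∈ weylMatrices := by
  decide

/-- The condition `3 ∣ n₁ + 2 n₂` says that `n` are the root coordinates of a vector of the root
lattice. -/
def IsWeylAffine (a1 a2 : V) (g : Equiv.Perm V) : Prop :=
  ∃ M ∈ weylMatrices, ∃ n1 n2 : ℤ, 3 ∣ n1 + 2 * n2 ∧ ∀ v : V,
    ⟪a1, g v⟫ = M.1 * ⟪a1, v⟫ + M.2.1 * ⟪a2, v⟫ + n1 ∧
      ⟪a2, g v⟫ = M.2.2.1 * ⟪a1, v⟫ + M.2.2.2 * ⟪a2, v⟫ + n2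

lemma isWeylAffine_one : IsWeylAffine a1 a2 1 :=
  ⟨(1, 0, 0, 1), by decide, 0, 0, by decide, fun v => by simp⟩

lemma IsWeylAffine.mul {g h : Equiv.Perm V} (hg : IsWeylAffine a1 a2 g)
    (hh : IsWeylAffine a1 a2 h) : IsWeylAffine a1 a2 (g * h) := by
  obtain ⟨M, hM, n1, n2, hn, hg⟩ := hg
  obtain ⟨N, hN, m1, m2, hm, hh⟩ := hh
  refine ⟨matMul M N, matMul_mem_weylMatrices M hM N hN, M.1 * m1 + M.2.1 * m2 + n1,
    M.2.2.1 * m1 + M.2.2.2 * m2 + n2, ?_, fun v => ?_⟩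
  · fin_cases hM <;> simp only at * <;> omega
  · simp only [Equiv.Perm.mul_apply, (hg _).1, (hg _).2, (hh v).1, (hh v).2, matMul]
    constructor <;> push_cast <;> ring

lemma isWeylAffine_of_isAffRefl (hA : IsA2Base a1 a2) {g : Equiv.Perm V}
    (hg : IsAffRefl a1 a2 g) : IsWeylAffine a1 a2 g := by
  obtain ⟨α, hα, k, hg⟩ := hg
  obtain ⟨β, hβ, hαβ⟩ := mem_Phi_iff.1 hα
  obtain ⟨j, hg⟩ : ∃ j : ℤ, ∀ v, g v = sRefl β j v := by
    rcases hαβ with rfl | rfl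
    exacts [⟨k, hg⟩, ⟨-k, by simpa [sRefl_neg] using hg⟩]
  rcases hβ with rfl | rfl | rfl
  · refine ⟨(-1, 0, 1, 1), by decide, 2 * j, -j, by omega, fun v => ?_⟩
    simp only [hg, hA.inner_sRefl_a1, inner_add_left]
    push_cast; constructor <;> ring
  · refine ⟨(1, 1, 0, -1), by decide, -j, 2 * j, by omega, fun v => ?_⟩
    simp only [hg, hA.inner_sRefl_a2, inner_add_left]
    push_cast; constructor <;> ring
  · refine ⟨(0, -1, -1, 0), by decide, j, j, by omega, fun v => ?_⟩
    simp only [hg, hA.inner_sRefl_add]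
    push_cast; constructor <;> ring

lemma isWeylAffine_of_mem (hA : IsA2Base a1 a2) (w : AffWeyl a1 a2) :
    IsWeylAffine a1 a2 (w : Equiv.Perm V) := by
  obtain ⟨g, hg⟩ := w
  change g ∈ Subgroup.closure _ at hg
  change IsWeylAffine a1 a2 g
  induction hg using Subgroup.closure_induction'' with
  | mem g hg => exact isWeylAffine_of_isAffRefl hA hg
  | inv_mem g hg =>
    obtain ⟨α, hα, k, hg'⟩ := hg
    have : g⁻¹ = g := inv_eq_of_mul_eq_one_left <| Equiv.ext fun v => by
      simp [hg', sRefl_involutive (hA.inner_self_of_mem_Phi hα) k v]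
    rw [this]
    exact isWeylAffine_of_isAffRefl hA ⟨α, hα, k, hg'⟩
  | one => exact isWeylAffine_one
  | mul g h _ _ hg hh => exact hg.mul hh

def IsRegular (a1 a2 v : V) : Prop := ∀ β ∈ PosRoots a1 a2, ⟪β, v⟫ ∉ Set.range ((↑) : ℤ → ℝ)

/-- Counts the walls separating `v` from `A₀`: a positive root `β` takes values in `(0, 1)` on
`A₀`, so exactly `|⌊⟪β, v⟫⌋|` of the walls `H_{β,k}` lie between `v` and `A₀`. -/
def wallCount (a1 a2 v : V) : ℕ :=
  ⌊⟪a1, v⟫⌋.natAbs + ⌊⟪a2, v⟫⌋.natAbs + ⌊⟪a1 + a2, v⟫⌋.natAbs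

lemma floor_eq_ediv_three {t : ℝ} {N : ℤ} (h : 3 * t = N) : ⌊t⌋ = N / 3 := by
  rw [← Int.natCast_mul_floor_div_cancel (n := 3) three_ne_zero, Nat.cast_ofNat, h,
    Int.floor_intCast]
  rfl

lemma floor_intCast_sub {b : ℝ} (hb : b ∉ Set.range ((↑) : ℤ → ℝ)) (k : ℤ) :
    ⌊(k : ℝ) - b⌋ = k - ⌊b⌋ - 1 := by
  rw [sub_eq_neg_add, Int.floor_add_intCast, Int.floor_neg,
    (Int.ceil_eq_floor_add_one_iff_notMem b).2 hb]
  ring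

lemma floor_two_mul_sub_ne {b : ℝ} (hb : b ∉ Set.range ((↑) : ℤ → ℝ)) (j : ℤ) :
    ⌊2 * (j : ℝ) - b⌋ ≠ ⌊b⌋ := by
  have := floor_intCast_sub hb (2 * j)
  push_cast at this
  omega

lemma wallCount_sRefl_a1 (hA : IsA2Base a1 a2) {v : V} (hv : IsRegular a1 a2 v) :
    wallCount a1 a2 (sRefl a1 0 v) ≤ wallCount a1 a2 v + 1 ∧
      (⟪a1, v⟫ < 0 → wallCount a1 a2 (sRefl a1 0 v) + 1 = wallCount a1 a2 v) := by
  obtain ⟨h1, h2, h3⟩ := hA.inner_sRefl_a1 0 v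
  simp only [wallCount, h1, h2, h3, floor_intCast_sub (hv a1 a1_mem_PosRoots),
    Int.floor_sub_intCast, Int.floor_add_intCast]
  refine ⟨by omega, fun hx => ?_⟩
  have := Int.floor_lt.2 (by exact_mod_cast hx : ⟪a1, v⟫ < ((0 : ℤ) : ℝ))
  omega

lemma wallCount_sRefl_a2 (hA : IsA2Base a1 a2) {v : V} (hv : IsRegular a1 a2 v) :
    wallCount a1 a2 (sRefl a2 0 v) ≤ wallCount a1 a2 v + 1 ∧
      (⟪a2, v⟫ < 0 → wallCount a1 a2 (sRefl a2 0 v) + 1 = wallCount a1 a2 v) := by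
  obtain ⟨h1, h2, h3⟩ := hA.inner_sRefl_a2 0 v
  simp only [wallCount, h1, h2, h3, floor_intCast_sub (hv a2 a2_mem_PosRoots),
    Int.floor_sub_intCast, Int.floor_add_intCast]
  refine ⟨by omega, fun hy => ?_⟩
  have := Int.floor_lt.2 (by exact_mod_cast hy : ⟪a2, v⟫ < ((0 : ℤ) : ℝ))
  omega

lemma wallCount_sRefl_add (hA : IsA2Base a1 a2) {v : V} (hv : IsRegular a1 a2 v) :
    wallCount a1 a2 (sRefl (a1 + a2) 1 v) ≤ wallCount a1 a2 v + 1 ∧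
      (1 < ⟪a1 + a2, v⟫ → wallCount a1 a2 (sRefl (a1 + a2) 1 v) + 1 = wallCount a1 a2 v) := by
  obtain ⟨h1, h2, h3⟩ := hA.inner_sRefl_add 1 v
  simp only [wallCount, h1, h2, h3, floor_intCast_sub (hv a1 a1_mem_PosRoots),
    floor_intCast_sub (hv a2 a2_mem_PosRoots), floor_intCast_sub (hv _ add_mem_PosRoots)]
  refine ⟨by omega, fun hxy => ?_⟩
  have := Int.le_floor.2 (by exact_mod_cast hxy.le : ((1 : ℤ) : ℝ) ≤ ⟪a1 + a2, v⟫)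
  omega

lemma wallCount_simple_le (hA : IsA2Base a1 a2) {v : V} (hv : IsRegular a1 a2 v)
    {s : Equiv.Perm V} (hs : IsSimpleRefl a1 a2 s) :
    wallCount a1 a2 (s v) ≤ wallCount a1 a2 v + 1 := by
  rcases hs with h | h | h <;> rw [h]
  exacts [(wallCount_sRefl_a1 hA hv).1, (wallCount_sRefl_a2 hA hv).1,
    (wallCount_sRefl_add hA hv).1]

lemma exists_simple_descent (hA : IsA2Base a1 a2) {v : V} (hv : IsRegular a1 a2 v)
    (h : wallCount a1 a2 v ≠ 0) : ∃ α, ∃ hα : α ∈ Phi a1 a2, ∃ k : ℤ,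
      IsSimpleRefl a1 a2 (reflection hA hα k) ∧
        wallCount a1 a2 (sRefl α k v) + 1 = wallCount a1 a2 v := by
  by_cases hx : ⟪a1, v⟫ < 0
  · exact ⟨a1, Or.inl a1_mem_PosRoots, 0, Or.inl fun _ => rfl, (wallCount_sRefl_a1 hA hv).2 hx⟩
  by_cases hy : ⟪a2, v⟫ < 0
  · exact ⟨a2, Or.inl a2_mem_PosRoots, 0, Or.inr (Or.inl fun _ => rfl),
      (wallCount_sRefl_a2 hA hv).2 hy⟩
  refine ⟨a1 + a2, Or.inl add_mem_PosRoots, 1, Or.inr (Or.inr fun _ => rfl),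
    (wallCount_sRefl_add hA hv).2 ?_⟩
  by_contra hxy
  have hxy1 : ⟪a1 + a2, v⟫ < 1 :=
    (not_lt.1 hxy).lt_of_ne fun h1 => hv _ add_mem_PosRoots ⟨1, by simp [h1]⟩
  rw [inner_add_left] at hxy1
  apply h
  simp only [wallCount, inner_add_left, Int.natAbs_eq_zero, Nat.add_eq_zero_iff,
    Int.floor_eq_zero_iff, Set.mem_Ico]
  refine ⟨⟨⟨?_, ?_⟩, ?_, ?_⟩, ?_, ?_⟩ <;> linarith

section orbit

variable {q : V}

lemma three_mul_inner_apply_q {g : Equiv.Perm V} (hq1 : ⟪a1, q⟫ = 1 / 3) (hq2 : ⟪a2, q⟫ = 1 / 3)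
    {M : ℤ × ℤ × ℤ × ℤ} {n1 n2 : ℤ} (hg : ∀ v : V,
      ⟪a1, g v⟫ = M.1 * ⟪a1, v⟫ + M.2.1 * ⟪a2, v⟫ + n1 ∧
        ⟪a2, g v⟫ = M.2.2.1 * ⟪a1, v⟫ + M.2.2.2 * ⟪a2, v⟫ + n2) :
    3 * ⟪a1, g q⟫ = ((M.1 + M.2.1 + 3 * n1 : ℤ) : ℝ) ∧
      3 * ⟪a2, g q⟫ = ((M.2.2.1 + M.2.2.2 + 3 * n2 : ℤ) : ℝ) := by
  rw [(hg q).1, (hg q).2, hq1, hq2]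
  push_cast
  constructor <;> ring

lemma isRegular_apply_q (hA : IsA2Base a1 a2) (hq1 : ⟪a1, q⟫ = 1 / 3) (hq2 : ⟪a2, q⟫ = 1 / 3)
    (w : AffWeyl a1 a2) : IsRegular a1 a2 ((w : Equiv.Perm V) q) := by
  obtain ⟨M, hM, n1, n2, hn, hw⟩ := isWeylAffine_of_mem hA w
  obtain ⟨h1, h2⟩ := three_mul_inner_apply_q hq1 hq2 hw
  -- each row sum of a Weyl matrix, and the sum of all four entries, is prime to `3`
  rintro β hβ ⟨m, hm⟩
  rcases hβ with rfl | rfl | rfl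
  · have : 3 * m = M.1 + M.2.1 + 3 * n1 := by exact_mod_cast hm ▸ h1
    fin_cases hM <;> simp only at this <;> omega
  · have : 3 * m = M.2.2.1 + M.2.2.2 + 3 * n2 := by exact_mod_cast hm ▸ h2
    fin_cases hM <;> simp only at this <;> omega
  · have : ((3 * m : ℤ) : ℝ) = (M.1 + M.2.1 + 3 * n1 : ℤ) + (M.2.2.1 + M.2.2.2 + 3 * n2 : ℤ) := by
      rw [← h1, ← h2, Int.cast_mul, hm, inner_add_left]; push_cast; ring
    norm_cast at this
    fin_cases hM <;> simp only at this <;> omega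

lemma eq_one_of_wallCount_eq_zero (hA : IsA2Base a1 a2) (hq1 : ⟪a1, q⟫ = 1 / 3)
    (hq2 : ⟪a2, q⟫ = 1 / 3) {w : AffWeyl a1 a2}
    (h : wallCount a1 a2 ((w : Equiv.Perm V) q) = 0) : w = 1 := by
  obtain ⟨M, hM, n1, n2, hn, hw⟩ := isWeylAffine_of_mem hA w
  obtain ⟨h1, h2⟩ := three_mul_inner_apply_q hq1 hq2 hw
  have h3 : 3 * ⟪a1 + a2, (w : Equiv.Perm V) q⟫ = ((M.1 + M.2.1 + 3 * n1 : ℤ) : ℝ) +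
      ((M.2.2.1 + M.2.2.2 + 3 * n2 : ℤ) : ℝ) := by
    rw [inner_add_left, mul_add, h1, h2]
  simp only [wallCount, Nat.add_eq_zero_iff, Int.natAbs_eq_zero] at h
  rw [floor_eq_ediv_three h1, floor_eq_ediv_three h2,
    floor_eq_ediv_three (h3.trans (Int.cast_add _ _).symm)] at h
  -- `wq ∈ A₀` forces `wq = q`, and the only `x ↦ M x + n` fixing `q` is the identity
  obtain ⟨rfl, rfl, rfl⟩ : M = (1, 0, 0, 1) ∧ n1 = 0 ∧ n2 = 0 := by
    fin_cases hM <;> simp only [Prod.mk.injEq, true_and] at h ⊢ <;> omega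
  exact Subtype.ext <| Equiv.ext fun v =>
    hA.ext_inner (by simp [(hw v).1]) (by simp [(hw v).2])

lemma wallCount_le_length (hA : IsA2Base a1 a2) (hq1 : ⟪a1, q⟫ = 1 / 3) (hq2 : ⟪a2, q⟫ = 1 / 3)
    (l : List (AffWeyl a1 a2)) (hl : ∀ g ∈ l, IsSimpleRefl a1 a2 (g : Equiv.Perm V)) :
    wallCount a1 a2 ((l.prod : Equiv.Perm V) q) ≤ l.length := by
  induction l with
  | nil =>
    simp only [wallCount, List.prod_nil, OneMemClass.coe_one, Equiv.Perm.coe_one, id_eq,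
      inner_add_left, hq1, hq2]
    norm_num [Int.floor_eq_zero_iff]
  | cons s l ih =>
    have hs := wallCount_simple_le hA (isRegular_apply_q hA hq1 hq2 l.prod) (hl s (by simp))
    have hl' := ih fun g hg => hl g (by simp [hg])
    rw [List.prod_cons, List.length_cons]
    exact hs.trans (by omega)

lemma exists_simple_word (hA : IsA2Base a1 a2) (hq1 : ⟪a1, q⟫ = 1 / 3) (hq2 : ⟪a2, q⟫ = 1 / 3)
    (w : AffWeyl a1 a2) : ∃ l : List (AffWeyl a1 a2), (∀ g ∈ l, IsSimpleRefl a1 a2 g) ∧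
      l.length = wallCount a1 a2 ((w : Equiv.Perm V) q) ∧ l.prod = w := by
  induction hn : wallCount a1 a2 ((w : Equiv.Perm V) q) generalizing w with
  | zero => exact ⟨[], by simp, rfl, (eq_one_of_wallCount_eq_zero hA hq1 hq2 hn).symm⟩
  | succ n ih =>
    obtain ⟨α, hα, k, hs, hdesc⟩ :=
      exists_simple_descent hA (isRegular_apply_q hA hq1 hq2 w) (by omega)
    obtain ⟨l, hl, hlen, hprod⟩ := ih (reflection hA hα k * w) (by
      change wallCount a1 a2 (sRefl α k ((w : Equiv.Perm V) q)) = n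
      omega)
    refine ⟨reflection hA hα k :: l, ?_, by simp [hlen], ?_⟩
    · intro g hg
      rcases List.mem_cons.1 hg with rfl | hg
      exacts [hs, hl g hg]
    · rw [List.prod_cons, hprod, ← mul_assoc, reflection_mul_self, one_mul]

lemma len_eq_wallCount (hA : IsA2Base a1 a2) (hq1 : ⟪a1, q⟫ = 1 / 3) (hq2 : ⟪a2, q⟫ = 1 / 3)
    (w : AffWeyl a1 a2) : len a1 a2 w = wallCount a1 a2 ((w : Equiv.Perm V) q) := by
  obtain ⟨l, hl, hlen, hprod⟩ := exists_simple_word hA hq1 hq2 w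
  refine le_antisymm (hlen ▸ Nat.sInf_le ⟨l, hl, rfl, hprod⟩) ?_
  obtain ⟨l', hl', hlen', hprod'⟩ : len a1 a2 w ∈ {n | ∃ l : List (AffWeyl a1 a2),
      (∀ g ∈ l, IsSimpleRefl a1 a2 g) ∧ l.length = n ∧ l.prod = w} :=
    Nat.sInf_mem ⟨_, l, hl, rfl, hprod⟩
  rw [← hlen', ← hprod']
  exact wallCount_le_length hA hq1 hq2 l' hl'

end orbit

def IsOutward (b d : ℝ) : Prop := (0 ≤ b ∧ 0 ≤ d) ∨ (b < 0 ∧ d ≤ 0)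

lemma IsOutward.add_mul {b d s : ℝ} (h : IsOutward b d) (hs : 0 ≤ s) :
    IsOutward (b + s * d) d := by
  rcases h with ⟨hb, hd⟩ | ⟨hb, hd⟩
  · exact Or.inl ⟨by positivity, hd⟩
  · exact Or.inr ⟨by nlinarith, hd⟩

lemma IsOutward.floor_mono {b d s : ℝ} (h : IsOutward b d) (hs : 0 ≤ s) :
    (0 ≤ ⌊b⌋ ∧ ⌊b⌋ ≤ ⌊b + s * d⌋) ∨ (⌊b + s * d⌋ ≤ ⌊b⌋ ∧ ⌊b⌋ < 0) := by
  rcases h with ⟨hb, hd⟩ | ⟨hb, hd⟩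
  · exact Or.inl ⟨Int.floor_nonneg.2 hb, Int.floor_mono (by nlinarith)⟩
  · exact Or.inr ⟨Int.floor_mono (by nlinarith), Int.floor_lt.2 (by exact_mod_cast hb)⟩

lemma IsOutward.natAbs_floor_add_intCast {b : ℝ} {m : ℤ} (h : IsOutward b m) :
    ⌊b + m⌋.natAbs = ⌊b⌋.natAbs + m.natAbs := by
  rw [Int.floor_add_intCast]
  rcases h with ⟨hb, hm⟩ | ⟨hb, hm⟩
  · have := Int.floor_nonneg.2 hb
    have : 0 ≤ m := by exact_mod_cast hm
    omega
  · have := Int.floor_lt.2 (by exact_mod_cast hb : b < ((0 : ℤ) : ℝ))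
    have : m ≤ 0 := by exact_mod_cast hm
    omega

lemma inner_nonneg_of_forall_add_mem {E : Type*} [NormedAddCommGroup E] [InnerProductSpace ℝ E]
    {C : Set E} (hC : IsPreconnected C) {v α β : E} (hv : v ∈ C)
    (hα : ∀ u ∈ C, u + α ∈ C) {t : ℝ} (ht : t < ⟪β, v⟫) (hβ : ∀ u ∈ C, ⟪β, u⟫ ≠ t) :
    0 ≤ ⟪β, α⟫ := by
  by_contra! hneg
  have hmem : ∀ n : ℕ, v + (n : ℝ) • α ∈ C := by
    intro n
    induction n with
    | zero => simpa using hv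
    | succ n ih => simpa [add_smul, add_assoc] using hα _ ih
  obtain ⟨n, hn⟩ := exists_nat_gt ((⟪β, v⟫ - t) / -⟪β, α⟫)
  have hlow : ⟪β, v + (n : ℝ) • α⟫ < t := by
    rw [div_lt_iff₀ (neg_pos.2 hneg)] at hn
    rw [inner_add_right, real_inner_smul_right]
    linarith
  obtain ⟨u, hu, hut⟩ := hC.intermediate_value (hmem n) hv
    (continuous_const.inner continuous_id).continuousOn ⟨hlow.le, ht.le⟩
  exact hβ u hu hut

lemma isOutward_of_forall_add_mem {v α β : V} (hβ : β ∈ PosRoots a1 a2)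
    (hv : v ∉ StripUnion a1 a2)
    (hα : ∀ u ∈ connectedComponentIn (StripUnion a1 a2)ᶜ v,
      u + α ∈ connectedComponentIn (StripUnion a1 a2)ᶜ v) :
    IsOutward ⟪β, v⟫ ⟪β, α⟫ := by
  have hC := isPreconnected_connectedComponentIn (F := (StripUnion a1 a2)ᶜ) (x := v)
  have hvC := mem_connectedComponentIn (F := (StripUnion a1 a2)ᶜ) hv
  have hstrip : ∀ u ∈ connectedComponentIn (StripUnion a1 a2)ᶜ v, u ∉ Strip β := by
    intro u hu hus
    apply connectedComponentIn_subset _ _ hu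
    rcases hβ with rfl | rfl | rfl
    exacts [Or.inl (Or.inl hus), Or.inl (Or.inr hus), Or.inr hus]
  have hvβ : ⟪β, v⟫ < 0 ∨ 1 < ⟪β, v⟫ := by
    by_contra! h
    exact hstrip v hvC h
  rcases hvβ with hlt | hgt
  · refine Or.inr ⟨hlt, ?_⟩
    have := inner_nonneg_of_forall_add_mem hC hvC hα (β := -β) (t := -(1 / 2))
      (by rw [inner_neg_left]; linarith)
      fun u hu h => hstrip u hu (by rw [inner_neg_left] at h; constructor <;> linarith)
    rwa [inner_neg_left, neg_nonneg] at this
  · exact Or.inl ⟨by linarith, inner_nonneg_of_forall_add_mem hC hvC hα (t := 1 / 2)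
      (by linarith) fun u hu h => hstrip u hu ⟨by linarith, by linarith⟩⟩

lemma isOutward_sRefl {α v : V} (hout : ∀ β ∈ PosRoots a1 a2, IsOutward ⟪β, v⟫ ⟪β, α⟫)
    {k : ℤ} (hk : ⟪α, v⟫ ≤ k) : ∀ β ∈ PosRoots a1 a2, IsOutward ⟪β, sRefl α k v⟫ ⟪β, α⟫ :=
  fun β hβ => by
    rw [inner_sRefl]
    exact (hout β hβ).add_mul (sub_nonneg.2 hk)

lemma inner_sRefl_eq_two_mul_sub {α β : V} (h : ⟪α, α⟫ = 2) (hαβ : α = β ∨ α = -β) (k : ℤ)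
    (v : V) : ∃ j : ℤ, ⟪β, sRefl α k v⟫ = 2 * j - ⟪β, v⟫ := by
  rcases hαβ with rfl | rfl
  · exact ⟨k, by rw [inner_sRefl, h]; ring⟩
  · rw [inner_neg_neg] at h
    exact ⟨-k, by rw [inner_sRefl, inner_neg_left, inner_neg_right, h]; push_cast; ring⟩

lemma wallCount_lt_wallCount_sRefl (hA : IsA2Base a1 a2) {α v : V} (hα : α ∈ Phi a1 a2)
    (hv : IsRegular a1 a2 v) (hout : ∀ β ∈ PosRoots a1 a2, IsOutward ⟪β, v⟫ ⟪β, α⟫) {k : ℤ}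
    (hk : ⟪α, v⟫ ≤ k) : wallCount a1 a2 v < wallCount a1 a2 (sRefl α k v) := by
  have hmono : ∀ β ∈ PosRoots a1 a2, (0 ≤ ⌊⟪β, v⟫⌋ ∧ ⌊⟪β, v⟫⌋ ≤ ⌊⟪β, sRefl α k v⟫⌋) ∨
      (⌊⟪β, sRefl α k v⟫⌋ ≤ ⌊⟪β, v⟫⌋ ∧ ⌊⟪β, v⟫⌋ < 0) := fun β hβ => by
    rw [inner_sRefl]
    exact (hout β hβ).floor_mono (sub_nonneg.2 hk)
  obtain ⟨β, hβ, hαβ⟩ := mem_Phi_iff.1 hα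
  -- the wall `H_{α,k}` crossed by the reflection is a wall `H_{β,±k}`
  have hcross : ⌊⟪β, sRefl α k v⟫⌋ ≠ ⌊⟪β, v⟫⌋ := by
    obtain ⟨j, hj⟩ := inner_sRefl_eq_two_mul_sub (hA.inner_self_of_mem_Phi hα) hαβ k v
    rw [hj]
    exact floor_two_mul_sub_ne (hv β hβ) j
  have h1 := hmono a1 a1_mem_PosRoots
  have h2 := hmono a2 a2_mem_PosRoots
  have h3 := hmono _ add_mem_PosRoots
  simp only [wallCount]
  rcases hβ with rfl | rfl | rfl <;> omega

lemma wallCount_add_root (hA : IsA2Base a1 a2) {α v : V} (hα : α ∈ Phi a1 a2)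
    (hout : ∀ β ∈ PosRoots a1 a2, IsOutward ⟪β, v⟫ ⟪β, α⟫) :
    wallCount a1 a2 (v + α) = wallCount a1 a2 v + 4 := by
  obtain ⟨m1, m2, m3, h1, h2, h3, h⟩ := hA.exists_inner_root_eq_int hα
  have key : ∀ β ∈ PosRoots a1 a2, ∀ m : ℤ, ⟪β, α⟫ = m →
      ⌊⟪β, v + α⟫⌋.natAbs = ⌊⟪β, v⟫⌋.natAbs + m.natAbs := fun β hβ m hm => by
    rw [inner_add_right, hm]
    exact (hm ▸ hout β hβ).natAbs_floor_add_intCast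
  simp only [wallCount, key a1 a1_mem_PosRoots m1 h1, key a2 a2_mem_PosRoots m2 h2,
    key _ add_mem_PosRoots m3 h3]
  omega

lemma wallCount_translate_root (hA : IsA2Base a1 a2) {α v : V} (hα : α ∈ Phi a1 a2)
    (hout : ∀ β ∈ PosRoots a1 a2, IsOutward ⟪β, v⟫ ⟪β, α⟫) (hv : IsRegular a1 a2 v)
    (hv' : IsRegular a1 a2 (sRefl α (⌊⟪α, v⟫⌋ + 1) v)) :
    wallCount a1 a2 v < wallCount a1 a2 (sRefl α (⌊⟪α, v⟫⌋ + 1) v) ∧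
      wallCount a1 a2 (sRefl α (⌊⟪α, v⟫⌋ + 1) v) < wallCount a1 a2 (v + α) ∧
      wallCount a1 a2 (v + α) = wallCount a1 a2 v + 4 := by
  have hαα := hA.inner_self_of_mem_Phi hα
  have hk : ⟪α, v⟫ ≤ (⌊⟪α, v⟫⌋ + 1 : ℤ) := by
    push_cast; exact (Int.lt_floor_add_one _).le
  have hk' : ⟪α, sRefl α (⌊⟪α, v⟫⌋ + 1) v⟫ ≤ (⌊⟪α, v⟫⌋ + 1 + 1 : ℤ) := by
    rw [inner_sRefl, hαα]; push_cast; linarith [Int.floor_le ⟪α, v⟫]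
  refine ⟨wallCount_lt_wallCount_sRefl hA hα hv hout hk, ?_, wallCount_add_root hA hα hout⟩
  rw [← sRefl_add_one_sRefl hαα (⌊⟪α, v⟫⌋ + 1) v]
  exact wallCount_lt_wallCount_sRefl hA hα hv' (isOutward_sRefl hout hk) hk'

end AffineWeylA2

open AffineWeylA2 in
/-- **Proposition.** Let `w` be a non-spiral element and `w' = t(α) w` its translation into
the chamber, where `α` is the root pointing into the chamber of `w`. Then `w < w'` in the
Bruhat order and `ℓ(w') = ℓ(w) + 4`. -/
theorem translation_into_chamber_length
    (a1 a2 q : V)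
    (hnorm1 : ⟪a1, a1⟫ = 2) (hnorm2 : ⟪a2, a2⟫ = 2) (hip : ⟪a1, a2⟫ = -1)
    (hq1 : ⟪a1, q⟫ = 1/3) (hq2 : ⟪a2, q⟫ = 1/3)
    (w : AffWeyl a1 a2) (hns : ¬ IsSpiral a1 a2 q w)
    (α : V) (hα : PointsInto a1 a2 (chamberOf a1 a2 q w) α)
    (tr : AffWeyl a1 a2) (htr : ∀ v : V, act tr v = v + α) :
    BruhatLT a1 a2 w (tr * w) ∧ len a1 a2 (tr * w) = len a1 a2 w + 4 := by
  have hA : IsA2Base a1 a2 := ⟨hnorm1, hnorm2, hip⟩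
  obtain ⟨hαΦ, hmove⟩ := hα
  set v := (w : Equiv.Perm V) q
  set k := ⌊⟪α, v⟫⌋ + 1
  set r1 := reflection hA hαΦ k
  set r2 := reflection hA hαΦ (k + 1)
  have htr' : tr = r2 * r1 := Subtype.ext <| Equiv.ext fun u =>
    (htr u).trans (sRefl_add_one_sRefl (hA.inner_self_of_mem_Phi hαΦ) k u).symm
  have hlen := len_eq_wallCount hA hq1 hq2
  obtain ⟨h1, h2, h4⟩ := wallCount_translate_root hA hαΦ
    (fun β hβ => isOutward_of_forall_add_mem hβ hns hmove)
    (isRegular_apply_q hA hq1 hq2 w) (isRegular_apply_q hA hq1 hq2 (r1 * w))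
  have hlt1 : len a1 a2 w < len a1 a2 (r1 * w) := by
    rw [hlen, hlen]; exact h1
  have hlt2 : len a1 a2 (r1 * w) < len a1 a2 (tr * w) := by
    rw [hlen, hlen]; exact h2.trans_eq (congrArg _ (htr v)).symm
  have hlen4 : len a1 a2 (tr * w) = len a1 a2 w + 4 := by
    rw [hlen, hlen]; exact (congrArg _ (htr v)).trans h4
  rw [htr', mul_assoc] at hlt2 hlen4 ⊢
  refine ⟨⟨(bruhatLE_mul_of_len_lt (isReflW_reflection hA hαΦ k) hlt1).trans
    (bruhatLE_mul_of_len_lt (isReflW_reflection hA hαΦ (k + 1)) hlt2), fun h => ?_⟩, hlen4⟩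
  rw [← h] at hlen4
  omega
end
end
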